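/- arXiv:2503.03442 — 11 statements merged into one kernel-verified Lean document; each statement's English description precedes it below -/
import Mathlib

section
/- Let η: (0,∞)×(0,2] → (0,∞) be monotone (nonincreasing in the first argument) and let (X,d,W) be a UCW-hyperbolic space admitting η as a modulus of uniform convexity. Define ψ_η(r,ε) := min( (min(ε/2, (ε²/(96r))·η(r, min(ε/(2r),2))²))²/4, (ε²/32)·η(r, min(ε/(2r),2))² ). Then X has property (G) with modulus ψ_η: for any r, ε > 0 and a, x, y ∈ X with d(x,a) ≤ r, d(y,a) ≤ r, d(x,y) ≥ ε, d((x+y)/2, a)² ≤ (1/2)d(x,a)² + (1/2)d(y,a)² - ψ_η(r,ε). -/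
noncomputable def psi (η : ℝ → ℝ → ℝ) (r ε : ℝ) : ℝ :=
  min ((min (ε/2) (ε^2/(96*r) * (η r (min (ε/(2*r)) 2))^2))^2 / 4)
      (ε^2/32 * (η r (min (ε/(2*r)) 2))^2)

set_option maxHeartbeats 2000000 in
/-- Main theorem: a UCW-hyperbolic space has property (G) with modulus ψ_η. -/
theorem stmt_2
{X : Type*} [MetricSpace X] (W : X → X → ℝ → X)
    (W1 : ∀ (x y z : X) (t : ℝ), t ∈ Set.Icc (0:ℝ) 1 →
      dist z (W x y t) ≤ (1 - t) * dist z x + t * dist z y)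
    (W2 : ∀ (x y : X) (t s : ℝ), t ∈ Set.Icc (0:ℝ) 1 → s ∈ Set.Icc (0:ℝ) 1 →
      dist (W x y t) (W x y s) = |t - s| * dist x y)
    (W3 : ∀ (x y : X) (t : ℝ), t ∈ Set.Icc (0:ℝ) 1 → W x y t = W y x (1 - t))
    (W4 : ∀ (x y z w : X) (t : ℝ), t ∈ Set.Icc (0:ℝ) 1 →
      dist (W x z t) (W y w t) ≤ (1 - t) * dist x y + t * dist z w)
(η : ℝ → ℝ → ℝ)
    (hηrange : ∀ r ε : ℝ, 0 < r → ε ∈ Set.Ioc (0:ℝ) 2 → η r ε ∈ Set.Ioc (0:ℝ) 1)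
    (hmod : ∀ (r ε : ℝ) (a x y : X), 0 < r → ε ∈ Set.Ioc (0:ℝ) 2 →
      dist x a ≤ r → dist y a ≤ r → ε * r ≤ dist x y →
      dist (W x y (1/2)) a ≤ (1 - η r ε) * r)
    (hmono : ∀ r s ε : ℝ, 0 < s → s ≤ r → ε ∈ Set.Ioc (0:ℝ) 2 → η r ε ≤ η s ε)
    (r ε : ℝ) (hr : 0 < r) (hε : 0 < ε) (a x y : X)
    (hx : dist x a ≤ r) (hy : dist y a ≤ r) (hxy : ε ≤ dist x y) :
    dist (W x y (1/2)) a ^ 2 ≤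
      (1/2) * dist x a ^ 2 + (1/2) * dist y a ^ 2 - psi η r ε := by
  unfold psi
  have hd1 : (0:ℝ) ≤ dist x a := dist_nonneg
  have hd2 : (0:ℝ) ≤ dist y a := dist_nonneg
  have hdm : (0:ℝ) ≤ dist (W x y (1/2)) a := dist_nonneg
  have htri : dist x y ≤ dist x a + dist y a := by
    calc dist x y ≤ dist x a + dist a y := dist_triangle _ _ _
    _ = dist x a + dist y a := by rw [dist_comm a y]
  set εh := min (ε/(2*r)) 2 with hεh_def
  have hεh : εh ∈ Set.Ioc (0:ℝ) 2 := ⟨lt_min (by positivity) (by norm_num), min_le_right _ _⟩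
  obtain ⟨hη0, hη1⟩ := hηrange r εh hr hεh
  set δ := min (ε/2) (ε^2/(96*r) * (η r εh)^2) with hδ_def
  have hδ0 : 0 < δ := lt_min (by positivity) (by positivity)
  have hψ1 : min (δ^2/4) (ε^2/32 * (η r εh)^2) ≤ δ^2/4 := min_le_left _ _
  have hψ2 : min (δ^2/4) (ε^2/32 * (η r εh)^2) ≤ ε^2/32 * (η r εh)^2 := min_le_right _ _
  have hmid : dist (W x y (1/2)) a ≤ (dist x a + dist y a) / 2 := by
    have h := W1 x y a (1/2) (by norm_num)
    rw [dist_comm a x, dist_comm a y, dist_comm a (W x y (1/2))] at h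
    linarith
  rcases le_or_gt δ |dist x a - dist y a| with hcase | hcase
  · -- the two distances differ a lot; midpoint inequality suffices
    have h1 : dist (W x y (1/2)) a ^ 2 ≤ ((dist x a + dist y a)/2)^2 :=
      pow_le_pow_left₀ hdm hmid 2
    have h2 : δ^2 ≤ (dist x a - dist y a)^2 := by
      rw [← sq_abs (dist x a - dist y a)]
      exact pow_le_pow_left₀ hδ0.le hcase 2
    linarith [h1, h2, hψ1]
  · -- the two distances are close; use uniform convexity
    set s := max (dist x a) (dist y a) with hs_def
    set t := min (dist x a) (dist y a) with ht_def
    have hse : ε/2 ≤ s := by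
      have : dist x a + dist y a ≤ s + s :=
        add_le_add (le_max_left _ _) (le_max_right _ _)
      linarith
    have hs0 : (0:ℝ) < s := lt_of_lt_of_le (by positivity) hse
    have hsr : s ≤ r := max_le hx hy
    have hkey : εh * s ≤ dist x y := by
      have h1 : εh ≤ ε/(2*r) := min_le_left _ _
      have h2 : εh * s ≤ (ε/(2*r)) * r :=
        mul_le_mul h1 hsr hs0.le (by positivity)
      have h3 : (ε/(2*r)) * r = ε/2 := by field_simp
      linarith
    have hconv := hmod s εh a x y hs0 hεh (le_max_left _ _) (le_max_right _ _) hkey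
    have hmono' := hmono r s εh hs0 hsr hεh
    have hdm2 : dist (W x y (1/2)) a ≤ (1 - η r εh) * s := by
      have h := mul_le_mul_of_nonneg_right hmono' hs0.le
      linarith [hconv, h]
    have hdmsq : dist (W x y (1/2)) a ^ 2 ≤ (1 - η r εh) * s^2 := by
      have h1 : dist (W x y (1/2)) a ^ 2 ≤ ((1 - η r εh) * s)^2 :=
        pow_le_pow_left₀ hdm hdm2 2
      have h2 : 0 ≤ η r εh * (1 - η r εh) * s^2 :=
        mul_nonneg (mul_nonneg hη0.le (by linarith)) (sq_nonneg s)
      linarith [h1, h2]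
    have ht0 : (0:ℝ) ≤ t := le_min hd1 hd2
    have hts : t ≤ s := min_le_max
    have hstδ : s - t < δ := by
      have h : s - t = |dist x a - dist y a| := by
        rw [hs_def, ht_def, max_sub_min_eq_abs, abs_sub_comm]
      linarith [h, hcase]
    have hsum : s^2 + t^2 = dist x a ^2 + dist y a ^2 := by
      rcases le_total (dist x a) (dist y a) with h | h
      · rw [hs_def, ht_def, max_eq_right h, min_eq_left h, add_comm]
      · rw [hs_def, ht_def, max_eq_left h, min_eq_right h]
    have hδ2 : δ ≤ ε^2/(96*r) * (η r εh)^2 := min_le_right _ _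
    have e1 : s^2 - t^2 ≤ 2*δ*s := by
      have h1 : (s - t) * (s + t) ≤ δ * (s + t) :=
        mul_le_mul_of_nonneg_right hstδ.le (by linarith)
      have h2 : 0 ≤ δ * (s - t) := mul_nonneg hδ0.le (by linarith)
      linarith [h1, h2]
    have e2 : δ * s ≤ ε^2/96 * (η r εh)^2 := by
      have h1 : δ * s ≤ δ * r := mul_le_mul_of_nonneg_left hsr hδ0.le
      have h2 : δ * r ≤ (ε^2/(96*r) * (η r εh)^2) * r :=
        mul_le_mul_of_nonneg_right hδ2 hr.le
      have h3 : (ε^2/(96*r) * (η r εh)^2) * r = ε^2/96 * (η r εh)^2 := by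
        field_simp
      linarith
    have e3 : ε^2/4 * (η r εh) ≤ (η r εh) * s^2 := by
      have h1 : (ε/2)*(ε/2) ≤ s*s := mul_le_mul hse hse (by positivity) hs0.le
      have h2 := mul_le_mul_of_nonneg_left h1 hη0.le
      linarith [h2]
    have e4 : ε^2 * (η r εh)^2 ≤ ε^2 * (η r εh) := by
      have h := mul_le_mul_of_nonneg_left hη1 (mul_nonneg (sq_nonneg ε) hη0.le)
      linarith [h]
    have e5 : (0:ℝ) ≤ ε^2 * (η r εh) := mul_nonneg (sq_nonneg ε) hη0.le
    linarith [hdmsq, e1, e2, e3, e4, e5, hψ2, hsum]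
end

section
/- Let (X,d,W) be a UCW-hyperbolic space with monotone modulus η, and ψ_η as in the main theorem. Then for any λ ∈ [0,1], r, ε > 0, and a, x, y ∈ X with d(x,a) ≤ r, d(y,a) ≤ r, d(x,y) ≥ ε, one has d((1-λ)x + λy, a)² ≤ (1-λ)d(x,a)² + λd(y,a)² - 2·min(λ,1-λ)·ψ_η(r,ε), and consequently also ≤ (1-λ)d(x,a)² + λd(y,a)² - 2λ(1-λ)·ψ_η(r,ε). -/
section Aux
variable {X : Type*} [MetricSpace X] (W : X → X → ℝ → X)

lemma Wzero (W1 : ∀ (x y z : X) (t : ℝ), t ∈ Set.Icc (0:ℝ) 1 →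
      dist z (W x y t) ≤ (1 - t) * dist z x + t * dist z y) (x y : X) : W x y 0 = x := by
  have h := W1 x y x 0 ⟨le_refl _, zero_le_one⟩
  simp only [sub_zero, one_mul, dist_self, zero_mul, add_zero, mul_zero] at h
  exact (dist_le_zero.mp h).symm

lemma Wone (W1 : ∀ (x y z : X) (t : ℝ), t ∈ Set.Icc (0:ℝ) 1 →
      dist z (W x y t) ≤ (1 - t) * dist z x + t * dist z y) (x y : X) : W x y 1 = y := by
  have h := W1 x y y 1 ⟨zero_le_one, le_refl _⟩
  simp only [sub_self, zero_mul, one_mul, dist_self, mul_zero, add_zero, zero_add] at h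
  exact (dist_le_zero.mp h).symm

lemma uniq
    (W1 : ∀ (x y z : X) (t : ℝ), t ∈ Set.Icc (0:ℝ) 1 →
      dist z (W x y t) ≤ (1 - t) * dist z x + t * dist z y)
    (W2 : ∀ (x y : X) (t s : ℝ), t ∈ Set.Icc (0:ℝ) 1 → s ∈ Set.Icc (0:ℝ) 1 →
      dist (W x y t) (W x y s) = |t - s| * dist x y)
    (η : ℝ → ℝ → ℝ)
    (hηrange : ∀ r ε : ℝ, 0 < r → ε ∈ Set.Ioc (0:ℝ) 2 → η r ε ∈ Set.Ioc (0:ℝ) 1)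
    (hmod : ∀ (r ε : ℝ) (a x y : X), 0 < r → ε ∈ Set.Ioc (0:ℝ) 2 →
      dist x a ≤ r → dist y a ≤ r → ε * r ≤ dist x y →
      dist (W x y (1/2)) a ≤ (1 - η r ε) * r)
    (x p z : X) (t : ℝ) (ht : t ∈ Set.Icc (0:ℝ) 1)
    (h1 : dist x z = t * dist x p) (h2 : dist z p = (1 - t) * dist x p) :
    z = W x p t := by
  by_contra hne
  have hρ : 0 < dist z (W x p t) := dist_pos.mpr hne
  have hd0 : (0:ℝ) ≤ dist x p := dist_nonneg
  have hqx : dist (W x p t) x = t * dist x p := by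
    have h := W2 x p t 0 ht ⟨le_refl _, zero_le_one⟩
    rw [Wzero W W1, sub_zero, abs_of_nonneg ht.1] at h
    exact h
  have hqp : dist (W x p t) p = (1 - t) * dist x p := by
    have h := W2 x p t 1 ht ⟨zero_le_one, le_refl _⟩
    rw [Wone W W1] at h
    rw [h, abs_of_nonpos (by linarith [ht.2] : t - 1 ≤ 0)]
    ring
  by_cases htd : t * dist x p = 0
  · have h3 : dist z (W x p t) ≤ dist z x + dist x (W x p t) := dist_triangle _ _ _
    rw [dist_comm z x, dist_comm x (W x p t)] at h3
    rw [h1, hqx, htd] at h3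
    linarith
  by_cases h1td : (1 - t) * dist x p = 0
  · have h3 : dist z (W x p t) ≤ dist z p + dist p (W x p t) := dist_triangle _ _ _
    rw [dist_comm p (W x p t)] at h3
    rw [h2, hqp, h1td] at h3
    linarith
  have htpos : 0 < t * dist x p := lt_of_le_of_ne (mul_nonneg ht.1 hd0) (Ne.symm htd)
  have h1tpos : 0 < (1 - t) * dist x p :=
    lt_of_le_of_ne (mul_nonneg (by linarith [ht.2]) hd0) (Ne.symm h1td)
  have hρ2 : dist z (W x p t) ≤ 2 * (t * dist x p) := by
    have h3 : dist z (W x p t) ≤ dist z x + dist x (W x p t) := dist_triangle _ _ _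
    rw [dist_comm z x, dist_comm x (W x p t), h1, hqx] at h3
    linarith
  have hmem : dist z (W x p t) / (t * dist x p) ∈ Set.Ioc (0:ℝ) 2 := by
    constructor
    · exact div_pos hρ htpos
    · rw [div_le_iff₀ htpos]; linarith
  have hm := hmod (t * dist x p) (dist z (W x p t) / (t * dist x p)) x z (W x p t)
    htpos hmem (by rw [dist_comm z x, h1]) (le_of_eq hqx)
    (le_of_eq (div_mul_cancel₀ _ (ne_of_gt htpos)))
  have hη := (hηrange (t * dist x p) (dist z (W x p t) / (t * dist x p)) htpos hmem).1
  have hm' : dist (W z (W x p t) (1/2)) x < t * dist x p := by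
    calc dist (W z (W x p t) (1/2)) x ≤ (1 - η (t * dist x p) (dist z (W x p t) / (t * dist x p))) * (t * dist x p) := hm
    _ < t * dist x p := by nlinarith
  have hpm : dist p (W z (W x p t) (1/2)) ≤ (1 - t) * dist x p := by
    have h := W1 z (W x p t) p (1/2) ⟨by norm_num, by norm_num⟩
    rw [dist_comm p z, h2, dist_comm p (W x p t), hqp] at h
    calc dist p (W z (W x p t) (1/2)) ≤ (1 - 1/2) * ((1-t)*dist x p) + 1/2 * ((1-t)*dist x p) := h
    _ = (1 - t) * dist x p := by ring
  have htri : dist x p ≤ dist x (W z (W x p t) (1/2)) + dist (W z (W x p t) (1/2)) p := dist_triangle _ _ _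
  rw [dist_comm x (W z (W x p t) (1/2)), dist_comm (W z (W x p t) (1/2)) p] at htri
  have : t * dist x p + (1 - t) * dist x p = dist x p := by ring
  linarith


set_option maxHeartbeats 2000000 in
lemma key
    (W1 : ∀ (x y z : X) (t : ℝ), t ∈ Set.Icc (0:ℝ) 1 →
      dist z (W x y t) ≤ (1 - t) * dist z x + t * dist z y)
    (W2 : ∀ (x y : X) (t s : ℝ), t ∈ Set.Icc (0:ℝ) 1 → s ∈ Set.Icc (0:ℝ) 1 →
      dist (W x y t) (W x y s) = |t - s| * dist x y)
    (η : ℝ → ℝ → ℝ)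
    (hηrange : ∀ r ε : ℝ, 0 < r → ε ∈ Set.Ioc (0:ℝ) 2 → η r ε ∈ Set.Ioc (0:ℝ) 1)
    (hmod : ∀ (r ε : ℝ) (a x y : X), 0 < r → ε ∈ Set.Ioc (0:ℝ) 2 →
      dist x a ≤ r → dist y a ≤ r → ε * r ≤ dist x y →
      dist (W x y (1/2)) a ≤ (1 - η r ε) * r)
    (hmono : ∀ r s ε : ℝ, 0 < s → s ≤ r → ε ∈ Set.Ioc (0:ℝ) 2 → η r ε ≤ η s ε)
    (l r ε : ℝ) (hl0 : 0 ≤ l) (hl2 : l ≤ 1/2) (hr : 0 < r) (hε : 0 < ε) (a x y : X)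
    (hx : dist x a ≤ r) (hy : dist y a ≤ r) (hxy : ε ≤ dist x y) :
    dist (W x y l) a ^ 2 ≤
      (1 - l) * dist x a ^ 2 + l * dist y a ^ 2 - 2 * l * psi η r ε := by
  have hl1 : l ≤ 1 := by linarith
  have hlmem : l ∈ Set.Icc (0:ℝ) 1 := ⟨hl0, hl1⟩
  have hu0 : (0:ℝ) ≤ dist x a := dist_nonneg
  have hv0 : (0:ℝ) ≤ dist y a := dist_nonneg
  have hw0 : (0:ℝ) ≤ dist (W x y l) a := dist_nonneg
  have hD0 : (0:ℝ) ≤ dist x y := dist_nonneg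
  have hDuv : dist x y ≤ dist x a + dist y a := dist_triangle_right x y a
  have hD2r : dist x y ≤ 2 * r := by linarith
  have hε2r : ε ≤ 2 * r := le_trans hxy hD2r
  have hmin2 : min (ε/(2*r)) 2 = ε/(2*r) := by
    apply min_eq_left
    rw [div_le_iff₀ (by positivity)]
    linarith
  have hεrmem : ε/(2*r) ∈ Set.Ioc (0:ℝ) 2 := by
    constructor
    · positivity
    · rw [div_le_iff₀ (by positivity)]; linarith
  obtain ⟨hη1, hη2⟩ := hηrange r (ε/(2*r)) hr hεrmem
  have hψ1 : psi η r ε ≤ (min (ε/2) (ε^2/(96*r) * (η r (ε/(2*r)))^2))^2/4 := by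
    unfold psi
    rw [hmin2]
    exact min_le_left _ _
  have hψ2 : psi η r ε ≤ ε^2/32 * (η r (ε/(2*r)))^2 := by
    unfold psi
    rw [hmin2]
    exact min_le_right _ _
  have hc0 : 0 < min (ε/2) (ε^2/(96*r) * (η r (ε/(2*r)))^2) := by
    apply lt_min (by positivity)
    positivity
  have hcε : min (ε/2) (ε^2/(96*r) * (η r (ε/(2*r)))^2) ≤ ε/2 := min_le_left _ _
  -- now abstract the numbers
  generalize hcdef : min (ε/2) (ε^2/(96*r) * (η r (ε/(2*r)))^2) = c at *
  have hwB : dist (W x y l) a ≤ (1 - l) * dist x a + l * dist y a := by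
    have h := W1 x y a l hlmem
    rw [dist_comm a x, dist_comm a y] at h
    rw [dist_comm]
    exact h
  rcases le_total c |dist x a - dist y a| with hcase | hcase
  · -- Case 1: the two distances differ a lot
    have hcc : c^2 ≤ (dist x a - dist y a)^2 := by
      have h := sq_abs (dist x a - dist y a)
      nlinarith [abs_nonneg (dist x a - dist y a)]
    have e1 : l * psi η r ε ≤ l * (c^2/4) :=
      mul_le_mul_of_nonneg_left hψ1 hl0
    have e2 : l * (1-l) * c^2 ≤ l * (1-l) * (dist x a - dist y a)^2 :=
      mul_le_mul_of_nonneg_left hcc (by nlinarith)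
    have e3 : l * (c^2/4) * 2 ≤ l * (1-l) * c^2 := by
      have := mul_nonneg (mul_nonneg hl0 (by linarith : (0:ℝ) ≤ 1/2 - l)) (sq_nonneg c)
      nlinarith [this]
    have e4 : dist (W x y l) a ^ 2 ≤ ((1 - l) * dist x a + l * dist y a)^2 :=
      pow_le_pow_left₀ hw0 hwB 2
    have hid : (1 - l) * dist x a ^ 2 + l * dist y a ^ 2
        = ((1 - l) * dist x a + l * dist y a)^2
          + l * (1-l) * (dist x a - dist y a)^2 := by ring
    linarith
  · -- Case 2: the two distances are close
    have habs := abs_le.mp hcase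
    have hs_half : ε/2 ≤ max (dist x a) (dist y a) := by
      have h1 : dist x a ≤ max (dist x a) (dist y a) := le_max_left _ _
      have h2 : dist y a ≤ max (dist x a) (dist y a) := le_max_right _ _
      linarith
    have hsr : max (dist x a) (dist y a) ≤ r := max_le hx hy
    have hs0 : 0 < max (dist x a) (dist y a) := by linarith
    have hsv : max (dist x a) (dist y a) ≤ dist y a + c :=
      max_le (by linarith [habs.2]) (by linarith [hc0])
    -- midpoint bound
    have hεs : ε/(2*r) * max (dist x a) (dist y a) ≤ dist x y := by
      have h1 : ε/(2*r) * max (dist x a) (dist y a) ≤ ε/(2*r) * r :=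
        mul_le_mul_of_nonneg_left hsr (by positivity)
      have h2 : ε/(2*r) * r = ε/2 := by field_simp
      linarith
    have hmid := hmod (max (dist x a) (dist y a)) (ε/(2*r)) a x y hs0 hεrmem
      (le_max_left _ _) (le_max_right _ _) hεs
    have hmono' := hmono r (max (dist x a) (dist y a)) (ε/(2*r)) hs0 hsr hεrmem
    have hss : η r (ε/(2*r)) * (ε/2) ≤
        η (max (dist x a) (dist y a)) (ε/(2*r)) * max (dist x a) (dist y a) :=
      mul_le_mul hmono' hs_half (by positivity) (le_trans hη1.le hmono')
    have hexp : (1 - η (max (dist x a) (dist y a)) (ε/(2*r))) * max (dist x a) (dist y a)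
        = max (dist x a) (dist y a)
          - η (max (dist x a) (dist y a)) (ε/(2*r)) * max (dist x a) (dist y a) := by ring
    have hpa : dist (W x y (1/2)) a ≤ max (dist x a) (dist y a)
        - η r (ε/(2*r)) * (ε/2) := by linarith
    -- identify W x y l with a point on the segment [x, midpoint]
    have hxz : dist x (W x y l) = l * dist x y := by
      have h := W2 x y l 0 hlmem ⟨le_refl _, zero_le_one⟩
      rw [Wzero W W1, sub_zero, abs_of_nonneg hl0] at h
      rw [dist_comm]
      exact h
    have hxp : dist x (W x y (1/2)) = (1/2) * dist x y := by
      have h := W2 x y (1/2) 0 ⟨by norm_num, by norm_num⟩ ⟨le_refl _, zero_le_one⟩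
      rw [Wzero W W1, sub_zero, abs_of_nonneg (by norm_num : (0:ℝ) ≤ 1/2)] at h
      rw [dist_comm]
      exact h
    have hzp : dist (W x y l) (W x y (1/2)) = (1/2 - l) * dist x y := by
      have h := W2 x y l (1/2) hlmem ⟨by norm_num, by norm_num⟩
      rw [abs_of_nonpos (by linarith : l - 1/2 ≤ 0)] at h
      rw [h]; ring
    have hzeq : W x y l = W x (W x y (1/2)) (2*l) := by
      apply uniq W W1 W2 η hηrange hmod x (W x y (1/2)) (W x y l) (2*l)
        ⟨by linarith, by linarith⟩
      · rw [hxz, hxp]; ring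
      · rw [hzp, hxp]; ring
    have hw2 : dist (W x y l) a ≤ (1 - 2*l) * dist x a
        + 2*l * (max (dist x a) (dist y a) - η r (ε/(2*r)) * (ε/2)) := by
      have h := W1 x (W x y (1/2)) a (2*l) ⟨by linarith, by linarith⟩
      rw [← hzeq, dist_comm a x, dist_comm a (W x y (1/2))] at h
      have h2 : 2*l * dist (W x y (1/2)) a
          ≤ 2*l * (max (dist x a) (dist y a) - η r (ε/(2*r)) * (ε/2)) :=
        mul_le_mul_of_nonneg_left hpa (by linarith)
      rw [dist_comm]
      linarith
    -- arithmetic finish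
    have h3c : 3 * c ≤ ε * η r (ε/(2*r)) / 16 := by
      have hc2 : c ≤ ε^2/(96*r) * (η r (ε/(2*r)))^2 := hcdef ▸ min_le_right _ _
      have h1 : ε^2/(96*r) ≤ ε/48 := by
        rw [div_le_iff₀ (by positivity)]
        nlinarith
      have h2 : ε^2/(96*r) * (η r (ε/(2*r)))^2 ≤ ε/48 * η r (ε/(2*r)) := by
        nlinarith [hη1.le, sq_nonneg (η r (ε/(2*r)))]
      linarith
    have hδ0 : (0:ℝ) ≤ l * (15/16 * ε * η r (ε/(2*r))) := by positivity
    have hwBδ : dist (W x y l) a ≤ ((1 - l) * dist x a + l * dist y a)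
        - l * (15/16 * ε * η r (ε/(2*r))) := by
      have h1 : 2*l * max (dist x a) (dist y a) ≤ 2*l * (dist y a + c) :=
        mul_le_mul_of_nonneg_left hsv (by linarith)
      have h4 : l * (-c) ≤ l * (dist x a - dist y a) :=
        mul_le_mul_of_nonneg_left (by linarith [habs.1]) hl0
      have h5 : l * (3*c) ≤ l * (ε * η r (ε/(2*r)) / 16) :=
        mul_le_mul_of_nonneg_left h3c hl0
      linarith [hw2, h1, h4, h5]
    have hBε : ε/4 ≤ (1 - l) * dist x a + l * dist y a := by
      have h1 : ε/4 ≤ dist x a := by linarith [habs.1, habs.2]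
      have h2 : ε/4 ≤ dist y a := by linarith [habs.1, habs.2]
      linarith [mul_le_mul_of_nonneg_left h1 (by linarith : (0:ℝ) ≤ 1 - l),
        mul_le_mul_of_nonneg_left h2 hl0]
    have hδB : l * (15/16 * ε * η r (ε/(2*r))) ≤ (1 - l) * dist x a + l * dist y a := by
      linarith
    have hsq : dist (W x y l) a ^ 2 ≤ ((1 - l) * dist x a + l * dist y a)^2
        - l * (15/16 * ε * η r (ε/(2*r))) * ((1 - l) * dist x a + l * dist y a) := by
      have e1 : dist (W x y l) a ^ 2
          ≤ (((1 - l) * dist x a + l * dist y a) - l * (15/16 * ε * η r (ε/(2*r))))^2 :=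
        pow_le_pow_left₀ hw0 hwBδ 2
      have e2 : l * (15/16 * ε * η r (ε/(2*r))) * (l * (15/16 * ε * η r (ε/(2*r))))
          ≤ l * (15/16 * ε * η r (ε/(2*r))) * ((1 - l) * dist x a + l * dist y a) :=
        mul_le_mul_of_nonneg_left hδB hδ0
      linarith
    have hδBψ : 2 * l * psi η r ε
        ≤ l * (15/16 * ε * η r (ε/(2*r))) * ((1 - l) * dist x a + l * dist y a) := by
      have h1 : l * (15/16 * ε * η r (ε/(2*r))) * (ε/4)
          ≤ l * (15/16 * ε * η r (ε/(2*r))) * ((1 - l) * dist x a + l * dist y a) :=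
        mul_le_mul_of_nonneg_left hBε hδ0
      have h3 : 2 * l * psi η r ε ≤ 2 * l * (ε^2/32 * (η r (ε/(2*r)))^2) :=
        mul_le_mul_of_nonneg_left hψ2 (by linarith)
      linarith [mul_nonneg (mul_nonneg (mul_nonneg hl0 (sq_nonneg ε)) hη1.le)
        (by linarith : (0:ℝ) ≤ 15/64 - η r (ε/(2*r))/16)]
    have hB2 : ((1 - l) * dist x a + l * dist y a)^2
        ≤ (1 - l) * dist x a ^ 2 + l * dist y a ^ 2 := by
      linarith [mul_nonneg (mul_nonneg hl0 (by linarith : (0:ℝ) ≤ 1 - l))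
        (sq_nonneg (dist x a - dist y a))]
    linarith

end Aux

/-- The section of the squared distance is uniformly convex on bounded subsets. -/
theorem stmt_3
{X : Type*} [MetricSpace X] (W : X → X → ℝ → X)
    (W1 : ∀ (x y z : X) (t : ℝ), t ∈ Set.Icc (0:ℝ) 1 →
      dist z (W x y t) ≤ (1 - t) * dist z x + t * dist z y)
    (W2 : ∀ (x y : X) (t s : ℝ), t ∈ Set.Icc (0:ℝ) 1 → s ∈ Set.Icc (0:ℝ) 1 →
      dist (W x y t) (W x y s) = |t - s| * dist x y)
    (W3 : ∀ (x y : X) (t : ℝ), t ∈ Set.Icc (0:ℝ) 1 → W x y t = W y x (1 - t))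
    (W4 : ∀ (x y z w : X) (t : ℝ), t ∈ Set.Icc (0:ℝ) 1 →
      dist (W x z t) (W y w t) ≤ (1 - t) * dist x y + t * dist z w)
(η : ℝ → ℝ → ℝ)
    (hηrange : ∀ r ε : ℝ, 0 < r → ε ∈ Set.Ioc (0:ℝ) 2 → η r ε ∈ Set.Ioc (0:ℝ) 1)
    (hmod : ∀ (r ε : ℝ) (a x y : X), 0 < r → ε ∈ Set.Ioc (0:ℝ) 2 →
      dist x a ≤ r → dist y a ≤ r → ε * r ≤ dist x y →
      dist (W x y (1/2)) a ≤ (1 - η r ε) * r)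
    (hmono : ∀ r s ε : ℝ, 0 < s → s ≤ r → ε ∈ Set.Ioc (0:ℝ) 2 → η r ε ≤ η s ε)
    (l r ε : ℝ) (hl : l ∈ Set.Icc (0:ℝ) 1) (hr : 0 < r) (hε : 0 < ε) (a x y : X)
    (hx : dist x a ≤ r) (hy : dist y a ≤ r) (hxy : ε ≤ dist x y) :
    dist (W x y l) a ^ 2 ≤
      (1 - l) * dist x a ^ 2 + l * dist y a ^ 2 - 2 * min l (1 - l) * psi η r ε ∧
    dist (W x y l) a ^ 2 ≤
      (1 - l) * dist x a ^ 2 + l * dist y a ^ 2 - 2 * (l * (1 - l)) * psi η r ε := by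
  have hψ0 : 0 ≤ psi η r ε := by
    unfold psi
    apply le_min
    · positivity
    · positivity
  have h1 : dist (W x y l) a ^ 2 ≤
      (1 - l) * dist x a ^ 2 + l * dist y a ^ 2 - 2 * min l (1 - l) * psi η r ε := by
    rcases le_total l (1/2) with h | h
    · have hk := key W W1 W2 η hηrange hmod hmono l r ε hl.1 h hr hε a x y hx hy hxy
      have hmin : min l (1-l) = l := min_eq_left (by linarith)
      rw [hmin]
      exact hk
    · have hswap : W x y l = W y x (1-l) := W3 x y l hl
      have hk := key W W1 W2 η hηrange hmod hmono (1-l) r ε (by linarith [hl.2])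
        (by linarith) hr hε a y x hy hx (by rw [dist_comm]; exact hxy)
      have hmin : min l (1-l) = 1-l := min_eq_right (by linarith)
      rw [hmin, hswap]
      linarith [hk]
  refine ⟨h1, ?_⟩
  have hmin : l * (1-l) ≤ min l (1-l) := by
    rcases le_total l (1-l) with h | h
    · rw [min_eq_left h]; nlinarith [hl.1, hl.2]
    · rw [min_eq_right h]; nlinarith [hl.1, hl.2]
  have := mul_nonneg (sub_nonneg.mpr hmin) hψ0
  linarith
end

section
/- Let (X,d,W) be a UCW-hyperbolic space with monotone modulus η, T: X → X nonexpansive, x, y ∈ X, ε > 0, b > 0 with d(x,y) ≤ b, λ ∈ [0,1], and z := (1-λ)x + λy. Set δ := min(ε/2, b, (ε²/(16b))·η(2b, min(ε/(2b),2))). If d(x,Tx) ≤ δ and d(y,Ty) ≤ δ, then d(z,Tz) ≤ ε. -/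
set_option maxHeartbeats 1000000 in
/-- Quantitative convexity of approximate fixed points of nonexpansive maps. -/
theorem stmt_5
{X : Type*} [MetricSpace X] (W : X → X → ℝ → X)
    (W1 : ∀ (x y z : X) (t : ℝ), t ∈ Set.Icc (0:ℝ) 1 →
      dist z (W x y t) ≤ (1 - t) * dist z x + t * dist z y)
    (W2 : ∀ (x y : X) (t s : ℝ), t ∈ Set.Icc (0:ℝ) 1 → s ∈ Set.Icc (0:ℝ) 1 →
      dist (W x y t) (W x y s) = |t - s| * dist x y)
    (W3 : ∀ (x y : X) (t : ℝ), t ∈ Set.Icc (0:ℝ) 1 → W x y t = W y x (1 - t))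
    (W4 : ∀ (x y z w : X) (t : ℝ), t ∈ Set.Icc (0:ℝ) 1 →
      dist (W x z t) (W y w t) ≤ (1 - t) * dist x y + t * dist z w)
(η : ℝ → ℝ → ℝ)
    (hηrange : ∀ r ε : ℝ, 0 < r → ε ∈ Set.Ioc (0:ℝ) 2 → η r ε ∈ Set.Ioc (0:ℝ) 1)
    (hmod : ∀ (r ε : ℝ) (a x y : X), 0 < r → ε ∈ Set.Ioc (0:ℝ) 2 →
      dist x a ≤ r → dist y a ≤ r → ε * r ≤ dist x y →
      dist (W x y (1/2)) a ≤ (1 - η r ε) * r)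
    (hmono : ∀ r s ε : ℝ, 0 < s → s ≤ r → ε ∈ Set.Ioc (0:ℝ) 2 → η r ε ≤ η s ε)
    (T : X → X) (hT : ∀ x y : X, dist (T x) (T y) ≤ dist x y)
    (x y : X) (ε b : ℝ) (hε : 0 < ε) (hb : 0 < b) (hxy : dist x y ≤ b)
    (l : ℝ) (hl : l ∈ Set.Icc (0:ℝ) 1)
    (hx : dist x (T x) ≤ min (ε/2) (min b (ε^2/(16*b) * η (2*b) (min (ε/(2*b)) 2))))
    (hy : dist y (T y) ≤ min (ε/2) (min b (ε^2/(16*b) * η (2*b) (min (ε/(2*b)) 2)))) :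
    dist (W x y l) (T (W x y l)) ≤ ε := by
  set ε' := min (ε/(2*b)) 2 with hε'def
  have h2b : (0:ℝ) < 2*b := by linarith
  have hε'mem : ε' ∈ Set.Ioc (0:ℝ) 2 := ⟨lt_min (by positivity) (by norm_num), min_le_right _ _⟩
  set η' := η (2*b) ε' with hη'def
  have hη'mem := hηrange (2*b) ε' h2b hε'mem
  have hη'pos : 0 < η' := hη'mem.1
  set δ := min (ε/2) (min b (ε^2/(16*b) * η')) with hδdef
  have hδpos : 0 < δ := lt_min (by positivity) (lt_min hb (by positivity))
  have hδb : δ ≤ b := le_trans (min_le_right _ _) (min_le_left _ _)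
  have hδη : δ ≤ ε^2/(16*b) * η' := le_trans (min_le_right _ _) (min_le_right _ _)
  set z := W x y l with hzdef
  by_contra hcon
  push_neg at hcon
  -- endpoints of the geodesic
  have h0 : W x y 0 = x := by
    have h := W1 x y x 0 (by constructor <;> norm_num)
    simp at h
    exact h.symm
  have h1 : W x y 1 = y := by
    have h := W1 x y y 1 (by constructor <;> norm_num)
    simp at h
    exact h.symm
  have hdnn : (0:ℝ) ≤ dist x y := dist_nonneg
  have hxz : dist x z = l * dist x y := by
    have h := W2 x y l 0 hl (by constructor <;> norm_num)
    rw [h0] at h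
    rw [dist_comm]
    simpa [abs_of_nonneg hl.1] using h
  have hyz : dist y z = (1 - l) * dist x y := by
    have h := W2 x y l 1 hl (by constructor <;> norm_num)
    rw [h1] at h
    rw [dist_comm]
    have habs : |l - 1| = 1 - l := by rw [abs_of_nonpos (by linarith [hl.2])]; ring
    rw [habs] at h
    exact h
  have hsum : dist x z + dist y z = dist x y := by rw [hxz, hyz]; ring
  have hxzb : dist x z ≤ b := by
    rw [hxz]; nlinarith [hl.1, hl.2]
  have hyzb : dist y z ≤ b := by
    rw [hyz]; nlinarith [hl.1, hl.2]
  -- radii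
  set r₁ := dist x z + δ with hr₁def
  set r₂ := dist y z + δ with hr₂def
  have hr₁pos : 0 < r₁ := by have := dist_nonneg (x := x) (y := z); linarith
  have hr₂pos : 0 < r₂ := by have := dist_nonneg (x := y) (y := z); linarith
  have hr₁le : r₁ ≤ 2*b := by linarith
  have hr₂le : r₂ ≤ 2*b := by linarith
  have hε'r₁ : ε' * r₁ ≤ ε := by
    calc ε' * r₁ ≤ (ε/(2*b)) * (2*b) :=
          mul_le_mul (min_le_left _ _) hr₁le hr₁pos.le (by positivity)
      _ = ε := by field_simp
  have hε'r₂ : ε' * r₂ ≤ ε := by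
    calc ε' * r₂ ≤ (ε/(2*b)) * (2*b) :=
          mul_le_mul (min_le_left _ _) hr₂le hr₂pos.le (by positivity)
      _ = ε := by field_simp
  -- T z is within the balls
  have hTzx : dist (T z) x ≤ r₁ := by
    calc dist (T z) x ≤ dist (T z) (T x) + dist (T x) x := dist_triangle _ _ _
      _ ≤ dist z x + δ := by
          have := hT z x
          rw [dist_comm (T x) x]
          linarith [hx]
      _ = r₁ := by rw [dist_comm]
  have hTzy : dist (T z) y ≤ r₂ := by
    calc dist (T z) y ≤ dist (T z) (T y) + dist (T y) y := dist_triangle _ _ _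
      _ ≤ dist z y + δ := by
          have := hT z y
          rw [dist_comm (T y) y]
          linarith [hy]
      _ = r₂ := by rw [dist_comm]
  -- apply the modulus at both centers
  have hm1 : dist (W z (T z) (1/2)) x ≤ (1 - η r₁ ε') * r₁ :=
    hmod r₁ ε' x z (T z) hr₁pos hε'mem (by rw [dist_comm]; linarith [hδpos]) hTzx
      (le_trans hε'r₁ hcon.le)
  have hm2 : dist (W z (T z) (1/2)) y ≤ (1 - η r₂ ε') * r₂ :=
    hmod r₂ ε' y z (T z) hr₂pos hε'mem (by rw [dist_comm]; linarith [hδpos]) hTzy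
      (le_trans hε'r₂ hcon.le)
  have hmono1 : η' ≤ η r₁ ε' := hmono (2*b) r₁ ε' hr₁pos hr₁le hε'mem
  have hmono2 : η' ≤ η r₂ ε' := hmono (2*b) r₂ ε' hr₂pos hr₂le hε'mem
  have hm1' : dist (W z (T z) (1/2)) x ≤ (1 - η') * r₁ := by
    nlinarith [hm1, mul_le_mul_of_nonneg_right hmono1 hr₁pos.le]
  have hm2' : dist (W z (T z) (1/2)) y ≤ (1 - η') * r₂ := by
    nlinarith [hm2, mul_le_mul_of_nonneg_right hmono2 hr₂pos.le]
  -- the key inequality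
  have hkey : dist x y ≤ (1 - η') * (dist x y + 2*δ) := by
    calc dist x y ≤ dist x (W z (T z) (1/2)) + dist (W z (T z) (1/2)) y := dist_triangle _ _ _
      _ ≤ (1 - η') * r₁ + (1 - η') * r₂ := by rw [dist_comm x]; linarith
      _ = (1 - η') * (dist x y + 2*δ) := by rw [hr₁def, hr₂def]; rw [← hsum]; ring
  -- ε < dist x y + δ
  have hεlt : ε < dist x y + δ := by
    have t1 : dist z (T z) ≤ 2 * dist x z + δ := by
      calc dist z (T z) ≤ dist z x + dist x (T x) + dist (T x) (T z) := dist_triangle4 _ _ _ _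
        _ ≤ dist x z + δ + dist x z := by
            rw [dist_comm z x]; linarith [hT x z, hx]
        _ = 2 * dist x z + δ := by ring
    have t2 : dist z (T z) ≤ 2 * dist y z + δ := by
      calc dist z (T z) ≤ dist z y + dist y (T y) + dist (T y) (T z) := dist_triangle4 _ _ _ _
        _ ≤ dist y z + δ + dist y z := by
            rw [dist_comm z y]; linarith [hT y z, hy]
        _ = 2 * dist y z + δ := by ring
    linarith [hcon]
  -- derive the contradiction
  rw [div_mul_eq_mul_div, le_div_iff₀ (by positivity : (0:ℝ) < 16*b)] at hδη
  have s1 : η' * (dist x y + 2*δ) ≤ 2*δ := by nlinarith [hkey]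
  have s2 : η' * ε ≤ 2*δ := by nlinarith [mul_lt_mul_of_pos_left hεlt hη'pos, mul_pos hη'pos hδpos]
  have s3 : η' * ε * (16*b) ≤ 2 * (ε^2*η') := by nlinarith [mul_le_mul_of_nonneg_right s2 h2b.le]
  have s4 : 16*b ≤ 2*ε := by nlinarith [mul_pos hη'pos hε]
  have s5 : ε < 2*b := by linarith
  linarith
end

section
/- If (X,d,W) is a UCW-hyperbolic space and T: X → X is nonexpansive, then the fixed point set Fix(T) = {x ∈ X : Tx = x} is convex, i.e., for any fixed points x, y and λ ∈ [0,1], the point (1-λ)x + λy is a fixed point of T. -/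
/-- The fixed point set of a nonexpansive self-map of a UCW-hyperbolic space is convex. -/
theorem stmt_6
{X : Type*} [MetricSpace X] (W : X → X → ℝ → X)
    (W1 : ∀ (x y z : X) (t : ℝ), t ∈ Set.Icc (0:ℝ) 1 →
      dist z (W x y t) ≤ (1 - t) * dist z x + t * dist z y)
    (W2 : ∀ (x y : X) (t s : ℝ), t ∈ Set.Icc (0:ℝ) 1 → s ∈ Set.Icc (0:ℝ) 1 →
      dist (W x y t) (W x y s) = |t - s| * dist x y)
    (W3 : ∀ (x y : X) (t : ℝ), t ∈ Set.Icc (0:ℝ) 1 → W x y t = W y x (1 - t))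
    (W4 : ∀ (x y z w : X) (t : ℝ), t ∈ Set.Icc (0:ℝ) 1 →
      dist (W x z t) (W y w t) ≤ (1 - t) * dist x y + t * dist z w)
(η : ℝ → ℝ → ℝ)
    (hηrange : ∀ r ε : ℝ, 0 < r → ε ∈ Set.Ioc (0:ℝ) 2 → η r ε ∈ Set.Ioc (0:ℝ) 1)
    (hmod : ∀ (r ε : ℝ) (a x y : X), 0 < r → ε ∈ Set.Ioc (0:ℝ) 2 →
      dist x a ≤ r → dist y a ≤ r → ε * r ≤ dist x y →
      dist (W x y (1/2)) a ≤ (1 - η r ε) * r)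
    (hmono : ∀ r s ε : ℝ, 0 < s → s ≤ r → ε ∈ Set.Ioc (0:ℝ) 2 → η r ε ≤ η s ε)
    (T : X → X) (hT : ∀ x y : X, dist (T x) (T y) ≤ dist x y)
    (x y : X) (hx : T x = x) (hy : T y = y) (l : ℝ) (hl : l ∈ Set.Icc (0:ℝ) 1) :
    T (W x y l) = W x y l := by
  obtain ⟨hl0, hl1⟩ := hl
  set z := W x y l with hz
  set p := T z with hp
  set d := dist x y with hd
  have hzx : dist x z ≤ l * d := by
    have := W1 x y x l ⟨hl0, hl1⟩
    simpa [dist_self] using this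
  have hzy : dist y z ≤ (1 - l) * d := by
    have := W1 x y y l ⟨hl0, hl1⟩
    simpa [dist_self, dist_comm y x] using this
  have hpx : dist x p ≤ l * d := by
    calc dist x p = dist (T x) (T z) := by rw [hx]
    _ ≤ dist x z := hT x z
    _ ≤ l * d := hzx
  have hpy : dist y p ≤ (1 - l) * d := by
    calc dist y p = dist (T y) (T z) := by rw [hy]
    _ ≤ dist y z := hT y z
    _ ≤ (1 - l) * d := hzy
  by_contra hne
  have hδ : 0 < dist p z := dist_pos.mpr hne
  set δ := dist p z with hδdef
  have hr : 0 < l * d := by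
    by_contra hr
    push_neg at hr
    have hx1 : dist x p ≤ 0 := hpx.trans hr
    have hx2 : dist x z ≤ 0 := hzx.trans hr
    have : p = z := by
      have h1 : x = p := dist_le_zero.mp hx1
      have h2 : x = z := dist_le_zero.mp hx2
      rw [← h1, h2]
    exact hne this
  set r := l * d with hrdef
  set ε := δ / r with hε
  have hεmem : ε ∈ Set.Ioc (0:ℝ) 2 := by
    constructor
    · exact div_pos hδ hr
    · rw [div_le_iff₀ hr]
      calc δ ≤ dist p x + dist x z := dist_triangle p x z
      _ ≤ r + r := by
          have := hpx; rw [dist_comm] at this; linarith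
      _ = 2 * r := by ring
  have hεr : ε * r ≤ dist p z := by
    rw [hε, div_mul_cancel₀ _ (ne_of_gt hr)]
  have hmid := hmod r ε x p z hr hεmem (by rwa [dist_comm]) (by rwa [dist_comm]) hεr
  have hη := hηrange r ε hr hεmem
  have hmidy : dist (W p z (1/2)) y ≤ (1 - l) * d := by
    have h12 : (1/2 : ℝ) ∈ Set.Icc (0:ℝ) 1 := by norm_num
    have := W1 p z y (1/2) h12
    rw [dist_comm]
    calc dist y (W p z (1/2)) ≤ (1 - 1/2) * dist y p + (1/2) * dist y z := this
    _ ≤ (1 - 1/2) * ((1-l)*d) + (1/2) * ((1-l)*d) := by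
        have h1 : (0:ℝ) ≤ 1 - 1/2 := by norm_num
        have h2 : (0:ℝ) ≤ 1/2 := by norm_num
        exact add_le_add (mul_le_mul_of_nonneg_left hpy h1)
          (mul_le_mul_of_nonneg_left hzy h2)
    _ = (1 - l) * d := by ring
  have hmidx : dist (W p z (1/2)) x < r := by
    have : (1 - η r ε) * r < r := by
      have : 0 < η r ε * r := mul_pos hη.1 hr
      nlinarith
    exact lt_of_le_of_lt hmid this
  have : d < d := by
    calc d = dist x y := rfl
    _ ≤ dist x (W p z (1/2)) + dist (W p z (1/2)) y := dist_triangle _ _ _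
    _ < r + (1 - l) * d := by
        rw [dist_comm x]
        exact add_lt_add_of_lt_of_le hmidx hmidy
    _ = d := by rw [hrdef]; ring
  exact absurd this (lt_irrefl d)
end

section
/- If (X,d,W) is a UCW-hyperbolic space and T: X → X is asymptotically nonexpansive with respect to a sequence (δ_n) of non-negative reals with δ_n → 0, then Fix(T) is convex. -/
set_option maxHeartbeats 1600000


/-- The fixed point set of an asymptotically nonexpansive self-map of a
UCW-hyperbolic space is convex. -/
theorem stmt_7
{X : Type*} [MetricSpace X] (W : X → X → ℝ → X)
    (W1 : ∀ (x y z : X) (t : ℝ), t ∈ Set.Icc (0:ℝ) 1 →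
      dist z (W x y t) ≤ (1 - t) * dist z x + t * dist z y)
    (W2 : ∀ (x y : X) (t s : ℝ), t ∈ Set.Icc (0:ℝ) 1 → s ∈ Set.Icc (0:ℝ) 1 →
      dist (W x y t) (W x y s) = |t - s| * dist x y)
    (W3 : ∀ (x y : X) (t : ℝ), t ∈ Set.Icc (0:ℝ) 1 → W x y t = W y x (1 - t))
    (W4 : ∀ (x y z w : X) (t : ℝ), t ∈ Set.Icc (0:ℝ) 1 →
      dist (W x z t) (W y w t) ≤ (1 - t) * dist x y + t * dist z w)
(η : ℝ → ℝ → ℝ)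
    (hηrange : ∀ r ε : ℝ, 0 < r → ε ∈ Set.Ioc (0:ℝ) 2 → η r ε ∈ Set.Ioc (0:ℝ) 1)
    (hmod : ∀ (r ε : ℝ) (a x y : X), 0 < r → ε ∈ Set.Ioc (0:ℝ) 2 →
      dist x a ≤ r → dist y a ≤ r → ε * r ≤ dist x y →
      dist (W x y (1/2)) a ≤ (1 - η r ε) * r)
    (hmono : ∀ r s ε : ℝ, 0 < s → s ≤ r → ε ∈ Set.Ioc (0:ℝ) 2 → η r ε ≤ η s ε)
    (δ : ℕ → ℝ) (hδ : ∀ n, 0 ≤ δ n)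
    (hδ0 : Filter.Tendsto δ Filter.atTop (nhds 0))
    (T : X → X)
    (hT : ∀ (x y : X) (n : ℕ), dist (T^[n] x) (T^[n] y) ≤ (1 + δ n) * dist x y)
    (x y : X) (hx : T x = x) (hy : T y = y) (l : ℝ) (hl : l ∈ Set.Icc (0:ℝ) 1) :
    T (W x y l) = W x y l := by
  -- basic consequences of W1, W2
  have hmem01 : (0:ℝ) ∈ Set.Icc (0:ℝ) 1 := by constructor <;> norm_num
  have hmem11 : (1:ℝ) ∈ Set.Icc (0:ℝ) 1 := by constructor <;> norm_num
  have hmemhalf : (1/2:ℝ) ∈ Set.Icc (0:ℝ) 1 := by constructor <;> norm_num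
  have hW0 : ∀ u v : X, W u v 0 = u := by
    intro u v
    have h := W1 u v u 0 hmem01
    simp at h
    exact h.symm
  have hW1e : ∀ u v : X, W u v 1 = v := by
    intro u v
    have h := W1 u v v 1 hmem11
    simp at h
    exact h.symm
  have hmid : ∀ u v : X, dist (W u v (1/2)) u ≤ dist u v / 2 ∧
      dist (W u v (1/2)) v ≤ dist u v / 2 := by
    intro u v
    have h1 := W1 u v u (1/2) hmemhalf
    have h2 := W1 u v v (1/2) hmemhalf
    simp at h1 h2
    rw [dist_comm v u] at h2
    constructor
    · rw [dist_comm]; linarith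
    · rw [dist_comm]; linarith
  -- uniqueness of midpoints
  have huniq : ∀ (p q m₁ m₂ : X) (r : ℝ), 0 < r → dist p q = 2*r →
      dist m₁ p ≤ r → dist m₁ q ≤ r → dist m₂ p ≤ r → dist m₂ q ≤ r → m₁ = m₂ := by
    intro p q m₁ m₂ r hr hpq h1p h1q h2p h2q
    by_contra hne
    have hd : 0 < dist m₁ m₂ := dist_pos.mpr hne
    set ε := dist m₁ m₂ / r with hε
    have hε2 : ε ≤ 2 := by
      rw [hε, div_le_iff₀ hr]
      have := dist_triangle m₁ p m₂
      rw [dist_comm p m₂] at this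
      linarith
    have hεmem : ε ∈ Set.Ioc (0:ℝ) 2 := ⟨div_pos hd hr, hε2⟩
    have hεr : ε * r ≤ dist m₁ m₂ := by
      rw [hε, div_mul_cancel₀ _ (ne_of_gt hr)]
    have hA := hmod r ε p m₁ m₂ hr hεmem h1p h2p hεr
    have hB := hmod r ε q m₁ m₂ hr hεmem h1q h2q hεr
    have hη := (hηrange r ε hr hεmem).1
    have htri : dist p q ≤ dist (W m₁ m₂ (1/2)) p + dist (W m₁ m₂ (1/2)) q := by
      rw [dist_comm (W m₁ m₂ (1/2)) p]
      exact dist_triangle p _ q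
    nlinarith
  -- the midpoint of two fixed points is fixed
  have hfixmid : ∀ p q : X, T p = p → T q = q → p ≠ q →
      T (W p q (1/2)) = W p q (1/2) := by
    intro p q hp hq hpq
    set r := dist p q / 2 with hrdef
    have hr : 0 < r := by
      have := dist_pos.mpr hpq
      rw [hrdef]; linarith
    set m := W p q (1/2) with hm
    obtain ⟨hmp, hmq⟩ := hmid p q
    rw [← hm, ← hrdef] at hmp hmq
    have hTp : ∀ n, T^[n] p = p := fun n => Function.iterate_fixed hp n
    have hTq : ∀ n, T^[n] q = q := fun n => Function.iterate_fixed hq n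
    have key : ∀ ε : ℝ, 0 < ε → ∃ N, ∀ n ≥ N, dist (T^[n] m) m < ε := by
      intro ε hε
      set ε₀ := min ε r with hε₀def
      have hε₀ : 0 < ε₀ := lt_min hε hr
      have hε₀r : ε₀ ≤ r := min_le_right _ _
      have h2r : (0:ℝ) < 2*r := by linarith
      set ε' := ε₀ / (2*r) with hε'def
      have hε' : ε' ∈ Set.Ioc (0:ℝ) 2 := by
        constructor
        · exact div_pos hε₀ h2r
        · rw [hε'def, div_le_iff₀ h2r]; linarith
      set η₀ := η (2*r) ε' with hη₀def
      have hη₀ := hηrange (2*r) ε' h2r hε'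
      have hexN : ∃ N, ∀ n ≥ N, δ n < min η₀ 1 := by
        have hpos : 0 < min η₀ 1 := lt_min hη₀.1 one_pos
        obtain ⟨N, hN⟩ := Metric.tendsto_atTop.mp hδ0 (min η₀ 1) hpos
        refine ⟨N, fun n hn => ?_⟩
        have := hN n hn
        rwa [Real.dist_eq, sub_zero, abs_of_nonneg (hδ n)] at this
      obtain ⟨N, hN⟩ := hexN
      refine ⟨N, fun n hn => ?_⟩
      by_contra hcon
      push_neg at hcon
      have hε₀dist : ε₀ ≤ dist (T^[n] m) m := le_trans (min_le_left _ _) hcon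
      have hδη : δ n < η₀ := lt_of_lt_of_le (hN n hn) (min_le_left _ _)
      have hδ1 : δ n ≤ 1 := le_of_lt (lt_of_lt_of_le (hN n hn) (min_le_right _ _))
      have hδn0 := hδ n
      set rn := (1 + δ n) * r with hrn
      have hrnpos : 0 < rn := by rw [hrn]; nlinarith
      have hrn2r : rn ≤ 2*r := by rw [hrn]; nlinarith
      have hrrn : r ≤ rn := by rw [hrn]; nlinarith
      have hp' : dist (T^[n] m) p ≤ rn := by
        calc dist (T^[n] m) p = dist (T^[n] m) (T^[n] p) := by rw [hTp n]
          _ ≤ (1 + δ n) * dist m p := hT m p n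
          _ ≤ rn := by rw [hrn]; nlinarith
      have hq' : dist (T^[n] m) q ≤ rn := by
        calc dist (T^[n] m) q = dist (T^[n] m) (T^[n] q) := by rw [hTq n]
          _ ≤ (1 + δ n) * dist m q := hT m q n
          _ ≤ rn := by rw [hrn]; nlinarith
      have hmp' : dist m p ≤ rn := le_trans hmp hrrn
      have hmq' : dist m q ≤ rn := le_trans hmq hrrn
      have hεrn : ε' * rn ≤ dist (T^[n] m) m := by
        have h1 : ε' * rn ≤ ε₀ := by
          rw [hε'def, hrn, div_mul_eq_mul_div, div_le_iff₀ h2r]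
          nlinarith
        linarith
      have hA := hmod rn ε' p (T^[n] m) m hrnpos hε' hp' hmp' hεrn
      have hB := hmod rn ε' q (T^[n] m) m hrnpos hε' hq' hmq' hεrn
      have hmono' := hmono (2*r) rn ε' hrnpos hrn2r hε'
      rw [← hη₀def] at hmono'
      have htri : dist p q ≤ dist (W (T^[n] m) m (1/2)) p + dist (W (T^[n] m) m (1/2)) q := by
        rw [dist_comm (W (T^[n] m) m (1/2)) p]
        exact dist_triangle p _ q
      have hpq2r : dist p q = 2*r := by rw [hrdef]; ring
      have hη₀1 := hη₀.2
      have hη₀0 := hη₀.1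
      nlinarith [mul_le_mul_of_nonneg_right hmono' (le_of_lt hrnpos)]
    -- conclude T m = m
    by_contra hTm
    have hd : 0 < dist (T m) m := dist_pos.mpr hTm
    set c := 3 + δ 1 with hc
    have hcpos : 0 < c := by have := hδ 1; rw [hc]; linarith
    obtain ⟨N, hN⟩ := key (dist (T m) m / c) (by positivity)
    have h1 : dist (T^[N] m) m < dist (T m) m / c := hN N le_rfl
    have h2 : dist (T^[N+1] m) m < dist (T m) m / c := hN (N+1) (by omega)
    have h3 : dist (T m) (T^[N+1] m) ≤ (1 + δ 1) * dist (T^[N] m) m := by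
      rw [Function.iterate_succ_apply']
      have := hT m (T^[N] m) 1
      simp only [Function.iterate_one] at this
      rw [dist_comm (T^[N] m) m]
      exact this
    have htri := dist_triangle (T m) (T^[N+1] m) m
    have hq : (dist (T m) m / c) * c = dist (T m) m := div_mul_cancel₀ _ (ne_of_gt hcpos)
    have hδ10 := hδ 1
    have hsc : dist (T^[N] m) m * c < dist (T m) m := by
      have := mul_lt_mul_of_pos_right h1 hcpos
      rwa [hq] at this
    have htc : dist (T^[N+1] m) m * c < dist (T m) m := by
      have := mul_lt_mul_of_pos_right h2 hcpos
      rwa [hq] at this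
    have hchain : dist (T m) m ≤ (1 + δ 1) * dist (T^[N] m) m + dist (T^[N+1] m) m := by
      linarith
    have hmul := mul_le_mul_of_nonneg_right hchain (le_of_lt hcpos)
    nlinarith [mul_pos (show (0:ℝ) < 1 + δ 1 by linarith)
      (show 0 < dist (T m) m - dist (T^[N] m) m * c by linarith)]
  -- trivial case x = y
  rcases eq_or_ne x y with rfl | hxy
  · have hWxx : W x x l = x := by
      have h := W1 x x x l hl
      simp at h
      exact h.symm
    rw [hWxx]; exact hx
  -- main case
  have ha : 0 < dist x y := dist_pos.mpr hxy
  -- midpoint closure on parameters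
  have hP2 : ∀ t s : ℝ, t ∈ Set.Icc (0:ℝ) 1 → s ∈ Set.Icc (0:ℝ) 1 →
      T (W x y t) = W x y t → T (W x y s) = W x y s →
      T (W x y ((t+s)/2)) = W x y ((t+s)/2) := by
    intro t s ht hs hPt hPs
    rcases eq_or_ne t s with rfl | hts
    · have h : (t+t)/2 = t := by ring
      rw [h]; exact hPt
    · have hts' : 0 < |t - s| := abs_pos.mpr (sub_ne_zero.mpr hts)
      set r := |t - s| * dist x y / 2 with hrdef
      have hr : 0 < r := by
        have := mul_pos hts' ha
        rw [hrdef]; linarith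
      have hpq : dist (W x y t) (W x y s) = 2 * r := by
        rw [W2 x y t s ht hs, hrdef]; ring
      have hne : W x y t ≠ W x y s := by
        intro h
        rw [h, dist_self] at hpq
        linarith
      have hfix := hfixmid (W x y t) (W x y s) hPt hPs hne
      have hmem2 : (t+s)/2 ∈ Set.Icc (0:ℝ) 1 :=
        ⟨by linarith [ht.1, hs.1], by linarith [ht.2, hs.2]⟩
      have hd1 : dist (W x y ((t+s)/2)) (W x y t) = r := by
        rw [W2 x y ((t+s)/2) t hmem2 ht, hrdef]
        have h : (t+s)/2 - t = (s-t)/2 := by ring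
        rw [h, abs_div, abs_sub_comm s t]
        rw [abs_of_pos (show (0:ℝ) < 2 by norm_num)]
        ring
      have hd2 : dist (W x y ((t+s)/2)) (W x y s) = r := by
        rw [W2 x y ((t+s)/2) s hmem2 hs, hrdef]
        have h : (t+s)/2 - s = (t-s)/2 := by ring
        rw [h, abs_div]
        rw [abs_of_pos (show (0:ℝ) < 2 by norm_num)]
        ring
      obtain ⟨hm1, hm2⟩ := hmid (W x y t) (W x y s)
      rw [hpq] at hm1 hm2
      have hm1' : dist (W (W x y t) (W x y s) (1/2)) (W x y t) ≤ r := by linarith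
      have hm2' : dist (W (W x y t) (W x y s) (1/2)) (W x y s) ≤ r := by linarith
      have heq := huniq (W x y t) (W x y s) (W x y ((t+s)/2))
        (W (W x y t) (W x y s) (1/2)) r hr hpq (le_of_eq hd1) (le_of_eq hd2) hm1' hm2'
      rw [heq]; exact hfix
  have hP0 : T (W x y 0) = W x y 0 := by rw [hW0]; exact hx
  have hP1 : T (W x y 1) = W x y 1 := by rw [hW1e]; exact hy
  have hmemk : ∀ n k : ℕ, k ≤ 2^n → ((k:ℝ)/2^n) ∈ Set.Icc (0:ℝ) 1 := by
    intro n k hk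
    constructor
    · positivity
    · rw [div_le_one (by positivity)]
      exact_mod_cast hk
  have hdyadic : ∀ n k : ℕ, k ≤ 2^n → T (W x y ((k:ℝ)/2^n)) = W x y ((k:ℝ)/2^n) := by
    intro n
    induction n with
    | zero =>
      intro k hk
      interval_cases k
      · simpa using hP0
      · simpa using hP1
    | succ n ih =>
      intro k hk
      have h2n : (2:ℕ)^(n+1) = 2 * 2^n := by rw [pow_succ]; ring
      rcases Nat.even_or_odd k with ⟨j, hj⟩ | ⟨j, hj⟩
      · subst hj
        have hj2 : j ≤ 2^n := by omega
        have heq : (((j+j : ℕ)):ℝ)/2^(n+1) = (j:ℝ)/2^n := by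
          push_cast
          rw [pow_succ]
          field_simp
          ring
        rw [heq]
        exact ih j hj2
      · subst hj
        have hj2 : j + 1 ≤ 2^n := by omega
        have heq : (((2*j+1 : ℕ)):ℝ)/2^(n+1) = ((j:ℝ)/2^n + ((j+1:ℕ):ℝ)/2^n)/2 := by
          push_cast
          rw [pow_succ]
          field_simp
          ring
        rw [heq]
        exact hP2 _ _ (hmemk n j (by omega)) (hmemk n (j+1) hj2)
          (ih j (by omega)) (ih (j+1) hj2)
  -- approximation of l by dyadics
  have hbound : ∀ n : ℕ, dist (T (W x y l)) (W x y l) ≤ (2 + δ 1) * dist x y / 2^n := by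
    intro n
    set k := ⌊l * 2^n⌋₊ with hkdef
    have h2n : (0:ℝ) < 2^n := by positivity
    have hl2 : 0 ≤ l * 2^n := mul_nonneg hl.1 (le_of_lt h2n)
    have hkle : (k:ℝ) ≤ l * 2^n := Nat.floor_le hl2
    have hklt : l * 2^n < k + 1 := Nat.lt_floor_add_one _
    have hk2 : k ≤ 2^n := by
      have h1 : l * 2^n ≤ 2^n := by nlinarith [hl.2]
      have h2 : (k:ℝ) ≤ ((2^n : ℕ):ℝ) := by push_cast; linarith
      exact_mod_cast h2
    have hPt := hdyadic n k hk2
    have htmem := hmemk n k hk2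
    have hlow : (k:ℝ)/2^n ≤ l := by rw [div_le_iff₀ h2n]; exact hkle
    have hhigh : l ≤ (k:ℝ)/2^n + 1/2^n := by
      rw [← add_div, le_div_iff₀ h2n]; linarith
    have habs : |l - (k:ℝ)/2^n| ≤ 1/2^n := by
      rw [abs_le]
      constructor
      · have : (0:ℝ) ≤ 1/2^n := by positivity
        linarith
      · linarith
    have hWd : dist (W x y l) (W x y ((k:ℝ)/2^n)) = |l - (k:ℝ)/2^n| * dist x y :=
      W2 x y l _ hl htmem
    have hWdle : dist (W x y l) (W x y ((k:ℝ)/2^n)) ≤ dist x y / 2^n := by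
      rw [hWd]
      have h := mul_le_mul_of_nonneg_right habs (le_of_lt ha)
      calc |l - (k:ℝ)/2^n| * dist x y ≤ (1/2^n) * dist x y := h
        _ = dist x y / 2^n := by ring
    have hTle : dist (T (W x y l)) (T (W x y ((k:ℝ)/2^n))) ≤
        (1 + δ 1) * dist (W x y l) (W x y ((k:ℝ)/2^n)) := by
      have := hT (W x y l) (W x y ((k:ℝ)/2^n)) 1
      simpa only [Function.iterate_one] using this
    have hδ10 := hδ 1
    calc dist (T (W x y l)) (W x y l)
        ≤ dist (T (W x y l)) (W x y ((k:ℝ)/2^n)) + dist (W x y ((k:ℝ)/2^n)) (W x y l) :=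
          dist_triangle _ _ _
      _ = dist (T (W x y l)) (T (W x y ((k:ℝ)/2^n))) + dist (W x y l) (W x y ((k:ℝ)/2^n)) := by
          rw [hPt, dist_comm (W x y ((k:ℝ)/2^n)) (W x y l)]
      _ ≤ (1 + δ 1) * dist (W x y l) (W x y ((k:ℝ)/2^n)) + dist (W x y l) (W x y ((k:ℝ)/2^n)) := by
          linarith [hTle]
      _ = (2 + δ 1) * dist (W x y l) (W x y ((k:ℝ)/2^n)) := by ring
      _ ≤ (2 + δ 1) * (dist x y / 2^n) := by
          apply mul_le_mul_of_nonneg_left hWdle (by linarith)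
      _ = (2 + δ 1) * dist x y / 2^n := by ring
  have hlim : Filter.Tendsto (fun n : ℕ => (2 + δ 1) * dist x y / 2^n) Filter.atTop (nhds 0) := by
    have hhalf := tendsto_pow_atTop_nhds_zero_of_lt_one
      (by norm_num : (0:ℝ) ≤ 1/2) (by norm_num : (1/2:ℝ) < 1)
    have heq : (fun n : ℕ => (2 + δ 1) * dist x y / 2^n)
        = fun n : ℕ => ((2 + δ 1) * dist x y) * (1/2)^n := by
      funext n
      rw [div_pow, one_pow, mul_one_div]
    rw [heq]
    simpa using hhalf.const_mul ((2 + δ 1) * dist x y)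
  have hfin : dist (T (W x y l)) (W x y l) ≤ 0 := ge_of_tendsto' hlim hbound
  exact dist_le_zero.mp hfin
end

section
/- Let b ≥ 0 and (a_n) be a nonincreasing sequence in [0,b]. Let ε > 0 and g: ℕ → ℕ. Then there exists N ≤ g̃^(⌈b/ε⌉)(0), where g̃(n) := n + g(n) and g̃^(k) denotes k-fold iteration, such that for all n, m ∈ [N, N + g(N)], |a_n - a_m| ≤ ε. -/
/-- Metastable version of the monotone convergence theorem. -/
theorem stmt_8 (b : ℝ) (hb : 0 ≤ b) (a : ℕ → ℝ)
    (hmono : ∀ n, a (n+1) ≤ a n) (hrange : ∀ n, a n ∈ Set.Icc (0:ℝ) b)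
    (ε : ℝ) (hε : 0 < ε) (g : ℕ → ℕ) :
    ∃ N ≤ (fun n => n + g n)^[⌈b / ε⌉₊] 0,
      ∀ n ∈ Set.Icc N (N + g N), ∀ m ∈ Set.Icc N (N + g N), |a n - a m| ≤ ε := by
  have ha : Antitone a := antitone_nat_of_succ_le hmono
  set F := fun n => n + g n with hF
  set K := ⌈b / ε⌉₊ with hK
  have hmonF : Monotone (fun i => F^[i] 0) := by
    apply monotone_nat_of_le_succ
    intro i
    rw [Function.iterate_succ_apply']
    simp [F]
  rcases Nat.eq_zero_or_pos K with hK0 | hKpos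
  · refine ⟨0, Nat.zero_le _, ?_⟩
    have hb0 : b = 0 := by
      by_contra h
      have : 0 < b / ε := div_pos (lt_of_le_of_ne hb (Ne.symm h)) hε
      have := Nat.ceil_pos.mpr this
      omega
    intro n _ m _
    have hn := hrange n; have hm := hrange m
    rw [hb0] at hn hm
    have h1 : a n = 0 := le_antisymm hn.2 hn.1
    have h2 : a m = 0 := le_antisymm hm.2 hm.1
    rw [h1, h2]; simp [hε.le]
  · obtain ⟨i, hiK, hi⟩ : ∃ i < K, a (F^[i] 0) - a (F^[i+1] 0) ≤ ε := by
      by_contra h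
      push_neg at h
      have C : ∀ i ≤ K, a (F^[i] 0) ≤ a 0 - i * ε := by
        intro i
        induction i with
        | zero => intro _; simp
        | succ j ih =>
          intro hj
          have h1 := h j (by omega)
          have h2 := ih (by omega)
          push_cast
          nlinarith
      obtain ⟨j, hj⟩ : ∃ j, K = j + 1 := ⟨K - 1, by omega⟩
      have h1 := h j (by omega)
      have h2 := C j (by omega)
      have hKb : b ≤ (K : ℝ) * ε := by
        calc b = (b / ε) * ε := by field_simp
          _ ≤ (K : ℝ) * ε := by gcongr; exact Nat.le_ceil _
      have h0b := (hrange 0).2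
      have hKpos' := (hrange (F^[K] 0)).1
      rw [hj] at hKb hKpos'
      push_cast at hKb
      nlinarith
    refine ⟨F^[i] 0, hmonF hiK.le, ?_⟩
    have hsucc : F^[i+1] 0 = F^[i] 0 + g (F^[i] 0) := by
      rw [Function.iterate_succ_apply']
    intro n hn m hm
    have key : ∀ p ∈ Set.Icc (F^[i] 0) (F^[i] 0 + g (F^[i] 0)),
        a (F^[i] 0) - ε ≤ a p ∧ a p ≤ a (F^[i] 0) := by
      intro p hp
      constructor
      · have : a (F^[i] 0 + g (F^[i] 0)) ≤ a p := ha hp.2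
        rw [← hsucc] at this
        linarith
      · exact ha hp.1
    have hn' := key n hn
    have hm' := key m hm
    rw [abs_sub_le_iff]
    constructor <;> linarith [hn'.1, hn'.2, hm'.1, hm'.2]
end

section
/- Let b ≥ 0, (a_n) a nonincreasing sequence in [0,b], (δ_n) a sequence of non-negative reals with a_{n+1} ≤ a_n + δ_n for all n, and γ: (0,∞) → ℕ such that for all ε > 0 and m ≥ γ(ε), the sum of δ_i for i ∈ [γ(ε), m) is ≤ ε. Then for every ε > 0 and g: ℕ → ℕ, there exists N with γ(ε/4) ≤ N ≤ (g^M)~^(⌈2b/ε⌉)(γ(ε/4)) such that for all n, m ∈ [N, N + g(N)], |a_n - a_m| ≤ ε. -/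
/-! The windows `[Nₖ, Nₖ + g Nₖ]`, `Nₖ = (g^M)~^(k) (γ (ε/4))`, are ordered and do not overlap,
so the drops of the nonincreasing sequence `a` across the first `K + 1` of them add up to at most `b`.
Since `b < (K + 1) ε` for `K = ⌈2b/ε⌉`, one of these drops is at most `ε`, and on a window `a`
oscillates by at most its drop. -/

open Finset

namespace Antitone

variable {a : ℕ → ℝ}

theorem abs_sub_le_of_mem_Icc (ha : Antitone a) {N M n m : ℕ} (hn : n ∈ Set.Icc N M)
    (hm : m ∈ Set.Icc N M) : |a n - a m| ≤ a N - a M := by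
  have := ha hn.1; have := ha hn.2; have := ha hm.1; have := ha hm.2
  rw [abs_sub_le_iff]
  constructor <;> linarith

theorem sum_range_sub_le (ha : Antitone a) {s t : ℕ → ℕ} (hts : ∀ k, t k ≤ s (k + 1))
    (K : ℕ) : ∑ k ∈ range K, (a (s k) - a (t k)) ≤ a (s 0) - a (s K) := by
  rw [← sum_range_sub' (fun k => a (s k))]
  exact sum_le_sum fun k _ => sub_le_sub_left (ha (hts k)) _

theorem exists_sub_le_of_lt_mul {b ε : ℝ} (ha : Antitone a)
    (hrange : ∀ n, a n ∈ Set.Icc 0 b) {K : ℕ} (hK : b < (K + 1) * ε) {s t : ℕ → ℕ}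
    (hts : ∀ k, t k ≤ s (k + 1)) : ∃ k ≤ K, a (s k) - a (t k) ≤ ε := by
  have hsum : ∑ k ∈ range (K + 1), (a (s k) - a (t k)) ≤ ∑ _k ∈ range (K + 1), ε := by
    have := ha.sum_range_sub_le hts (K + 1)
    have := (hrange (s 0)).2
    have := (hrange (s (K + 1))).1
    rw [sum_const, card_range, nsmul_eq_mul, Nat.cast_succ]
    linarith
  obtain ⟨k, hk, hdrop⟩ := exists_le_of_sum_le nonempty_range_add_one hsum
  exact ⟨k, Nat.lt_succ_iff.1 (mem_range.1 hk), hdrop⟩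

end Antitone

theorem stmt_9_general (b : ℝ) (a : ℕ → ℝ)
    (hmono : ∀ n, a (n+1) ≤ a n) (hrange : ∀ n, a n ∈ Set.Icc (0:ℝ) b)
    (γ : ℝ → ℕ)
    (ε : ℝ) (hε : 0 < ε) (g : ℕ → ℕ) :
    ∃ N, γ (ε/4) ≤ N ∧
      N ≤ (fun n => n + (Finset.range (n+1)).sup g)^[⌈2*b/ε⌉₊] (γ (ε/4)) ∧
      ∀ n ∈ Set.Icc N (N + g N), ∀ m ∈ Set.Icc N (N + g N), |a n - a m| ≤ ε := by
  have ha := antitone_nat_of_succ_le hmono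
  set F : ℕ → ℕ := fun n => n + (range (n + 1)).sup g
  set N : ℕ → ℕ := fun k => F^[k] (γ (ε / 4))
  have hF : id ≤ F := fun n => Nat.le_add_right _ _
  have hN : Monotone N := fun _ _ hkl => Function.monotone_iterate_of_id_le hF hkl _
  have hstep (k : ℕ) : N k + g (N k) ≤ N (k + 1) := by
    simp only [N, Function.iterate_succ_apply']
    exact Nat.add_le_add_left (le_sup (mem_range.2 (Nat.lt_succ_self _))) _
  have hK : b < (⌈2 * b / ε⌉₊ + 1) * ε := by
    have h2b : 2 * b ≤ ⌈2 * b / ε⌉₊ * ε := (div_le_iff₀ hε).1 (Nat.le_ceil _)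
    have hb : 0 ≤ b := (hrange 0).1.trans (hrange 0).2
    linarith
  obtain ⟨k, hk, hdrop⟩ := ha.exists_sub_le_of_lt_mul hrange hK hstep
  refine ⟨N k, hN (Nat.zero_le k), hN hk, fun n hn m hm => ?_⟩
  exact (ha.abs_sub_le_of_mem_Icc hn hm).trans hdrop

/-- Full quantitative (metastable) version of the Tan–Xu lemma. -/
theorem stmt_9 (b : ℝ) (hb : 0 ≤ b) (a : ℕ → ℝ)
    (hmono : ∀ n, a (n+1) ≤ a n) (hrange : ∀ n, a n ∈ Set.Icc (0:ℝ) b)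
    (δ : ℕ → ℝ) (hδ : ∀ n, 0 ≤ δ n) (hrec : ∀ n, a (n+1) ≤ a n + δ n)
    (γ : ℝ → ℕ)
    (hγ : ∀ ε : ℝ, 0 < ε → ∀ m, γ ε ≤ m → ∑ i ∈ Finset.Ico (γ ε) m, δ i ≤ ε)
    (ε : ℝ) (hε : 0 < ε) (g : ℕ → ℕ) :
    ∃ N, γ (ε/4) ≤ N ∧
      N ≤ (fun n => n + (Finset.range (n+1)).sup g)^[⌈2*b/ε⌉₊] (γ (ε/4)) ∧
      ∀ n ∈ Set.Icc N (N + g N), ∀ m ∈ Set.Icc N (N + g N), |a n - a m| ≤ ε :=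
  stmt_9_general b a hmono hrange γ ε hε g
end

section
/- Let (X,d,W) be a complete UCW-hyperbolic space with monotone modulus η, S a closed, convex, nonempty subset (with projection P_S), and (x_n) a sequence that is Fejér monotone with respect to S. Let b ≥ 0 with d(x_0, P_S x_0) ≤ b. Then for all ε > 0 and g: ℕ → ℕ, there is an N ≤ g̃^(⌈b²/ψ_η(b,ε)⌉)(0) such that for all n, m ∈ [N, N+g(N)], d(P_S x_n, P_S x_m) ≤ ε. -/
set_option maxHeartbeats 1000000 in
/-- Metastable convergence of shadow sequences of Fejér monotone sequences. -/
theorem stmt_11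
{X : Type*} [MetricSpace X] (W : X → X → ℝ → X)
    (W1 : ∀ (x y z : X) (t : ℝ), t ∈ Set.Icc (0:ℝ) 1 →
      dist z (W x y t) ≤ (1 - t) * dist z x + t * dist z y)
    (W2 : ∀ (x y : X) (t s : ℝ), t ∈ Set.Icc (0:ℝ) 1 → s ∈ Set.Icc (0:ℝ) 1 →
      dist (W x y t) (W x y s) = |t - s| * dist x y)
    (W3 : ∀ (x y : X) (t : ℝ), t ∈ Set.Icc (0:ℝ) 1 → W x y t = W y x (1 - t))
    (W4 : ∀ (x y z w : X) (t : ℝ), t ∈ Set.Icc (0:ℝ) 1 →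
      dist (W x z t) (W y w t) ≤ (1 - t) * dist x y + t * dist z w)
    [CompleteSpace X]
(η : ℝ → ℝ → ℝ)
    (hηrange : ∀ r ε : ℝ, 0 < r → ε ∈ Set.Ioc (0:ℝ) 2 → η r ε ∈ Set.Ioc (0:ℝ) 1)
    (hmod : ∀ (r ε : ℝ) (a x y : X), 0 < r → ε ∈ Set.Ioc (0:ℝ) 2 →
      dist x a ≤ r → dist y a ≤ r → ε * r ≤ dist x y →
      dist (W x y (1/2)) a ≤ (1 - η r ε) * r)
    (hmono : ∀ r s ε : ℝ, 0 < s → s ≤ r → ε ∈ Set.Ioc (0:ℝ) 2 → η r ε ≤ η s ε)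
(S : Set X) (hSne : S.Nonempty) (hScl : IsClosed S)
    (hSconv : ∀ x ∈ S, ∀ y ∈ S, ∀ t : ℝ, t ∈ Set.Icc (0:ℝ) 1 → W x y t ∈ S)
    (P : X → X) (hPmem : ∀ x : X, P x ∈ S)
    (hPproj : ∀ x : X, ∀ z ∈ S, dist x (P x) ≤ dist x z)
    (x : ℕ → X) (hFej : ∀ n, ∀ q ∈ S, dist (x (n+1)) q ≤ dist (x n) q)
    (b : ℝ) (hb : 0 ≤ b) (hx0 : dist (x 0) (P (x 0)) ≤ b)
    (ε : ℝ) (hε : 0 < ε) (g : ℕ → ℕ) :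
    ∃ N ≤ (fun n => n + g n)^[⌈b^2 / psi η b ε⌉₊] 0,
      ∀ n ∈ Set.Icc N (N + g N), ∀ m ∈ Set.Icc N (N + g N),
        dist (P (x n)) (P (x m)) ≤ ε := by
  classical
  have F1 : ∀ q ∈ S, ∀ n m : ℕ, n ≤ m → dist (x m) q ≤ dist (x n) q := by
    intro q hq n m hnm
    induction m, hnm using Nat.le_induction with
    | base => exact le_refl _
    | succ m hm ih => exact (hFej m q hq).trans ih
  set a : ℕ → ℝ := fun n => dist (x n) (P (x n)) with haDef
  have hdec : ∀ n m : ℕ, n ≤ m → a m ≤ a n := by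
    intro n m hnm
    exact (hPproj (x m) (P (x n)) (hPmem (x n))).trans (F1 (P (x n)) (hPmem (x n)) n m hnm)
  have hab : ∀ n, a n ≤ b := fun n => (hdec 0 n (Nat.zero_le n)).trans hx0
  have ha0 : ∀ n, 0 ≤ a n := fun n => dist_nonneg
  rcases eq_or_lt_of_le hb with hb0 | hb0
  · -- degenerate case b = 0
    refine ⟨0, Nat.zero_le _, ?_⟩
    have hx0S : x 0 ∈ S := by
      have h00 : x 0 = P (x 0) :=
        eq_of_dist_eq_zero (le_antisymm (hb0 ▸ hx0) dist_nonneg)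
      rw [h00]; exact hPmem _
    have hxn : ∀ n, x n = x 0 := by
      intro n
      refine eq_of_dist_eq_zero (le_antisymm ?_ dist_nonneg)
      have := F1 (x 0) hx0S 0 n (Nat.zero_le n)
      simpa using this
    intro n _ m _
    rw [hxn n, hxn m]
    simpa using hε.le
  · -- main case b > 0
    set ψ := psi η b ε with hψdef
    set ε₀ := min (ε/(2*b)) 2 with hε₀def
    have hε₀ : ε₀ ∈ Set.Ioc (0:ℝ) 2 :=
      ⟨lt_min (div_pos hε (by linarith)) two_pos, min_le_right _ _⟩
    have hη₀ := hηrange b ε₀ hb0 hε₀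
    have hψpos : 0 < ψ := by
      rw [hψdef]; unfold psi
      apply lt_min
      · have h1 : 0 < min (ε/2) (ε^2/(96*b) * (η b (min (ε/(2*b)) 2))^2) :=
          lt_min (half_pos hε)
            (mul_pos (div_pos (pow_pos hε 2) (by linarith)) (pow_pos hη₀.1 2))
        exact div_pos (pow_pos h1 2) (by norm_num)
      · exact mul_pos (by positivity) (pow_pos hη₀.1 2)
    have hψle : ψ ≤ ε^2/32 * (η b ε₀)^2 := by
      rw [hψdef]; unfold psi; exact min_le_right _ _
    set F : ℕ → ℕ := fun n => n + g n with hF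
    set K := ⌈b^2 / ψ⌉₊ with hK
    have hiter : ∀ (j n0 : ℕ), n0 ≤ F^[j] n0 := by
      intro j n0
      induction j with
      | zero => simp
      | succ j ih =>
        rw [Function.iterate_succ_apply']
        exact ih.trans (Nat.le_add_right _ _)
    have hK1 : 1 ≤ K := Nat.ceil_pos.mpr (div_pos (pow_pos hb0 2) hψpos)
    have hbK : (K : ℝ) * ψ ≥ b^2 := by
      have h := Nat.le_ceil (b^2 / ψ)
      rw [div_le_iff₀ hψpos] at h
      exact h
    have ha0sq : a 0 ^ 2 ≤ b ^ 2 := pow_le_pow_left₀ (ha0 0) (hab 0) 2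
    have hpig : ∃ k < K, a (F^[k] 0) ^ 2 - a (F^[k+1] 0) ^ 2 ≤ ψ := by
      by_contra hcon
      push_neg at hcon
      have hstep : ∀ j, 1 ≤ j → j ≤ K → a (F^[j] 0) ^ 2 + j * ψ < a 0 ^ 2 := by
        intro j hj
        induction j, hj using Nat.le_induction with
        | base =>
          intro _
          have h := hcon 0 hK1
          simp only [Function.iterate_zero_apply] at h
          norm_num at h ⊢
          linarith
        | succ j hj ih =>
          intro hjK
          have h1 := hcon j (lt_of_lt_of_le (Nat.lt_succ_self j) hjK)
          have h2 := ih (le_trans (Nat.le_succ j) hjK)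
          push_cast at h2 ⊢
          linarith
      have hfin := hstep K hK1 le_rfl
      nlinarith [sq_nonneg (a (F^[K] 0)), hbK, ha0sq, hfin]
    obtain ⟨k, hkK, hdrop⟩ := hpig
    set N := F^[k] 0 with hNdef
    refine ⟨N, ?_, ?_⟩
    · have heq : F^[K] 0 = F^[K - k] N := by
        rw [hNdef, ← Function.iterate_add_apply, Nat.sub_add_cancel hkK.le]
      rw [heq]
      exact hiter _ _
    · have hdrop' : a N ^ 2 - a (N + g N) ^ 2 ≤ ψ := by
        rw [Function.iterate_succ_apply'] at hdrop
        exact hdrop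
      set M := N + g N with hMdef
      have key : ∀ n m : ℕ, N ≤ n → n ≤ m → m ≤ M → dist (P (x n)) (P (x m)) ≤ ε := by
        intro n m hNn hnm hmM
        by_contra hc
        push_neg at hc
        have hqr : dist (x m) (P (x m)) ≤ dist (x m) (P (x n)) :=
          hPproj (x m) (P (x n)) (hPmem (x n))
        have hr_an : dist (x m) (P (x n)) ≤ a n := F1 (P (x n)) (hPmem (x n)) n m hnm
        have hpq2r : dist (P (x n)) (P (x m)) ≤ 2 * dist (x m) (P (x n)) := by
          calc dist (P (x n)) (P (x m))
              ≤ dist (P (x n)) (x m) + dist (x m) (P (x m)) := dist_triangle _ _ _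
            _ ≤ dist (x m) (P (x n)) + dist (x m) (P (x n)) := by
                rw [dist_comm (P (x n)) (x m)]; linarith
            _ = 2 * dist (x m) (P (x n)) := by ring
        have hrpos : ε / 2 < dist (x m) (P (x n)) := by linarith
        have hrb : dist (x m) (P (x n)) ≤ b := hr_an.trans (hab n)
        have hwS : W (P (x n)) (P (x m)) (1/2) ∈ S :=
          hSconv _ (hPmem _) _ (hPmem _) (1/2) (by norm_num)
        have hmod' := hmod (dist (x m) (P (x n))) ε₀ (x m) (P (x n)) (P (x m))
          (by linarith) hε₀ (dist_comm (P (x n)) (x m)).le (by rw [dist_comm]; exact hqr)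
          (by
            calc ε₀ * dist (x m) (P (x n)) ≤ (ε/(2*b)) * b := by
                  apply mul_le_mul (min_le_left _ _) hrb dist_nonneg
                  positivity
              _ = ε/2 := by field_simp
              _ ≤ dist (P (x n)) (P (x m)) := by linarith)
        have hmono' : η b ε₀ ≤ η (dist (x m) (P (x n))) ε₀ :=
          hmono b _ ε₀ (by linarith) hrb hε₀
        have ham : dist (x m) (P (x m)) ≤ (1 - η b ε₀) * dist (x m) (P (x n)) := by
          have h1 : dist (x m) (P (x m)) ≤ dist (x m) (W (P (x n)) (P (x m)) (1/2)) :=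
            hPproj _ _ hwS
          rw [dist_comm] at hmod'
          have h2 : (1 - η (dist (x m) (P (x n))) ε₀) * dist (x m) (P (x n))
              ≤ (1 - η b ε₀) * dist (x m) (P (x n)) :=
            mul_le_mul_of_nonneg_right (by linarith) dist_nonneg
          linarith
        have h3 : a M ≤ (1 - η b ε₀) * dist (x m) (P (x n)) :=
          le_trans (hdec m M hmM) ham
        have h4 : dist (x m) (P (x n)) ≤ a N := hr_an.trans (hdec N n hNn)
        have hN2 : dist (x m) (P (x n)) ^ 2 ≤ a N ^ 2 :=
          pow_le_pow_left₀ dist_nonneg h4 2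
        have hM2 : a M ^ 2 ≤ ((1 - η b ε₀) * dist (x m) (P (x n))) ^ 2 :=
          pow_le_pow_left₀ (ha0 M) h3 2
        have hr2 : (ε/2)^2 < dist (x m) (P (x n)) ^ 2 := by
          apply pow_lt_pow_left₀ hrpos (by positivity)
          norm_num
        have hD : (0:ℝ) ≤ η b ε₀ * (1 - η b ε₀) * dist (x m) (P (x n)) ^ 2 :=
          mul_nonneg (mul_nonneg hη₀.1.le (by linarith [hη₀.2])) (sq_nonneg _)
        have hE : η b ε₀ ^ 2 * (ε/2)^2 < η b ε₀ ^ 2 * dist (x m) (P (x n)) ^ 2 :=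
          mul_lt_mul_of_pos_left hr2 (pow_pos hη₀.1 2)
        have hG : (0:ℝ) < η b ε₀ ^ 2 * ε ^ 2 := mul_pos (pow_pos hη₀.1 2) (pow_pos hε 2)
        nlinarith [hdrop', hψle, hN2, hM2, hD, hE, hG]
      intro n hn m hm
      rcases le_total n m with hnm | hmn
      · exact key n m hn.1 hnm hm.2
      · rw [dist_comm]
        exact key m n hm.1 hmn hn.2
end

section
/- Let (X,d,W) be a complete UCW-hyperbolic space, S a closed, convex, nonempty subset, and (x_n) a sequence in X that is Fejér monotone with respect to S. Then the shadow sequence (P_S x_n) converges. -/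
/-- Convergence of shadow sequences of Fejér monotone sequences. -/
theorem stmt_12
{X : Type*} [MetricSpace X] (W : X → X → ℝ → X)
    (W1 : ∀ (x y z : X) (t : ℝ), t ∈ Set.Icc (0:ℝ) 1 →
      dist z (W x y t) ≤ (1 - t) * dist z x + t * dist z y)
    (W2 : ∀ (x y : X) (t s : ℝ), t ∈ Set.Icc (0:ℝ) 1 → s ∈ Set.Icc (0:ℝ) 1 →
      dist (W x y t) (W x y s) = |t - s| * dist x y)
    (W3 : ∀ (x y : X) (t : ℝ), t ∈ Set.Icc (0:ℝ) 1 → W x y t = W y x (1 - t))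
    (W4 : ∀ (x y z w : X) (t : ℝ), t ∈ Set.Icc (0:ℝ) 1 →
      dist (W x z t) (W y w t) ≤ (1 - t) * dist x y + t * dist z w)
    [CompleteSpace X]
(η : ℝ → ℝ → ℝ)
    (hηrange : ∀ r ε : ℝ, 0 < r → ε ∈ Set.Ioc (0:ℝ) 2 → η r ε ∈ Set.Ioc (0:ℝ) 1)
    (hmod : ∀ (r ε : ℝ) (a x y : X), 0 < r → ε ∈ Set.Ioc (0:ℝ) 2 →
      dist x a ≤ r → dist y a ≤ r → ε * r ≤ dist x y →
      dist (W x y (1/2)) a ≤ (1 - η r ε) * r)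
    (hmono : ∀ r s ε : ℝ, 0 < s → s ≤ r → ε ∈ Set.Ioc (0:ℝ) 2 → η r ε ≤ η s ε)
(S : Set X) (hSne : S.Nonempty) (hScl : IsClosed S)
    (hSconv : ∀ x ∈ S, ∀ y ∈ S, ∀ t : ℝ, t ∈ Set.Icc (0:ℝ) 1 → W x y t ∈ S)
    (P : X → X) (hPmem : ∀ x : X, P x ∈ S)
    (hPproj : ∀ x : X, ∀ z ∈ S, dist x (P x) ≤ dist x z)
    (x : ℕ → X) (hFej : ∀ n, ∀ q ∈ S, dist (x (n+1)) q ≤ dist (x n) q) :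
    ∃ p : X, Filter.Tendsto (fun n => P (x n)) Filter.atTop (nhds p) := by

  classical
  set dn : ℕ → ℝ := fun n => dist (x n) (P (x n)) with hdn
  have hFej' : ∀ q ∈ S, ∀ n m : ℕ, n ≤ m → dist (x m) q ≤ dist (x n) q := by
    intro q hq n m hnm
    induction m, hnm using Nat.le_induction with
    | base => exact le_refl _
    | succ m hm ih => exact le_trans (hFej m q hq) ih
  have hanti : ∀ n m : ℕ, n ≤ m → dn m ≤ dn n := by
    intro n m hnm
    induction m, hnm using Nat.le_induction with
    | base => exact le_refl _
    | succ m hm ih =>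
      calc dn (m+1) ≤ dist (x (m+1)) (P (x m)) := hPproj _ _ (hPmem _)
        _ ≤ dist (x m) (P (x m)) := hFej m _ (hPmem _)
        _ ≤ dn n := ih
  have hnonneg : ∀ n, 0 ≤ dn n := fun n => dist_nonneg
  have hbdd : BddBelow (Set.range dn) := ⟨0, by rintro _ ⟨n, rfl⟩; exact hnonneg n⟩
  set d := ⨅ n, dn n with hd
  have hdle : ∀ n, d ≤ dn n := fun n => ciInf_le hbdd n
  have hd0 : 0 ≤ d := le_ciInf hnonneg
  have hcauchy : CauchySeq (fun n => P (x n)) := by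
    rw [Metric.cauchySeq_iff']
    intro ε hε
    rcases eq_or_lt_of_le hd0 with h0 | hpos
    · obtain ⟨N, hN⟩ : ∃ N, dn N < ε/2 :=
        exists_lt_of_ciInf_lt (by rw [← hd, ← h0]; linarith)
      refine ⟨N, fun m hm => ?_⟩
      have h1 : dist (x m) (P (x N)) ≤ dn N := hFej' _ (hPmem _) N m hm
      have h2 : dn m ≤ dn N := hanti N m hm
      calc dist (P (x m)) (P (x N))
          ≤ dist (P (x m)) (x m) + dist (x m) (P (x N)) := dist_triangle _ _ _
        _ = dn m + dist (x m) (P (x N)) := by rw [dist_comm]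
        _ < ε := by linarith
    · have d0pos : 0 < dn 0 := lt_of_lt_of_le hpos (hdle 0)
      set ε' := min (ε / dn 0) 2 with hε'
      have hε'pos : 0 < ε' := lt_min (div_pos hε d0pos) two_pos
      have hε'Ioc : ε' ∈ Set.Ioc (0:ℝ) 2 := ⟨hε'pos, min_le_right _ _⟩
      set η₀ := η (dn 0) ε' with hη₀def
      have hη₀ : η₀ ∈ Set.Ioc (0:ℝ) 1 := hηrange (dn 0) ε' d0pos hε'Ioc
      obtain ⟨N, hN⟩ : ∃ N, dn N < d + η₀ * d :=
        exists_lt_of_ciInf_lt (by nlinarith [hη₀.1])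
      refine ⟨N, fun m hm => ?_⟩
      by_contra hcon
      push_neg at hcon
      have rpos : 0 < dn N := lt_of_lt_of_le hpos (hdle N)
      have h1 : dist (P (x N)) (x m) ≤ dn N := by
        rw [dist_comm]; exact hFej' _ (hPmem _) N m hm
      have h2 : dist (P (x m)) (x m) ≤ dn N := by
        rw [dist_comm]; exact hanti N m hm
      have h3 : ε' * dn N ≤ dist (P (x N)) (P (x m)) := by
        have hle : dn N ≤ dn 0 := hanti 0 N (Nat.zero_le N)
        have : ε' * dn N ≤ (ε / dn 0) * dn 0 := by
          have := min_le_left (ε / dn 0) 2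
          have hεd : 0 ≤ ε / dn 0 := le_of_lt (div_pos hε d0pos)
          nlinarith
        rw [div_mul_cancel₀ _ (ne_of_gt d0pos)] at this
        rw [dist_comm]
        linarith
      have hmid := hmod (dn N) ε' (x m) (P (x N)) (P (x m)) rpos hε'Ioc h1 h2 h3
      have hWmem : W (P (x N)) (P (x m)) (1/2) ∈ S :=
        hSconv _ (hPmem _) _ (hPmem _) (1/2) ⟨by norm_num, by norm_num⟩
      have hproj : dn m ≤ dist (x m) (W (P (x N)) (P (x m)) (1/2)) :=
        hPproj (x m) _ hWmem
      rw [dist_comm] at hproj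
      have hmono' : η₀ ≤ η (dn N) ε' :=
        hmono (dn 0) (dn N) ε' rpos (hanti 0 N (Nat.zero_le N)) hε'Ioc
      have hfin : dn m ≤ (1 - η₀) * dn N := by nlinarith
      have : d ≤ dn m := hdle m
      nlinarith [mul_le_mul_of_nonneg_left (le_of_lt hN) (sub_nonneg.2 hη₀.2),
        mul_pos (mul_pos hη₀.1 hη₀.1) hpos]
  exact cauchySeq_tendsto_of_complete hcauchy
end

section
/- Let (X,d,W) be a complete UCW-hyperbolic space, S a closed, convex, nonempty subset with projection P_S, (x_n) a sequence in X and (δ_n) non-negative reals with Σδ_n < ∞ such that for all q ∈ S and all n, d(x_{n+1}, q) ≤ d(x_n, q) + δ_n. Then the sequence (P_S x_n) converges. -/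
/-- Convergence of shadow sequences of quasi-Fejér monotone sequences. -/
theorem stmt_13
{X : Type*} [MetricSpace X] (W : X → X → ℝ → X)
    (W1 : ∀ (x y z : X) (t : ℝ), t ∈ Set.Icc (0:ℝ) 1 →
      dist z (W x y t) ≤ (1 - t) * dist z x + t * dist z y)
    (W2 : ∀ (x y : X) (t s : ℝ), t ∈ Set.Icc (0:ℝ) 1 → s ∈ Set.Icc (0:ℝ) 1 →
      dist (W x y t) (W x y s) = |t - s| * dist x y)
    (W3 : ∀ (x y : X) (t : ℝ), t ∈ Set.Icc (0:ℝ) 1 → W x y t = W y x (1 - t))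
    (W4 : ∀ (x y z w : X) (t : ℝ), t ∈ Set.Icc (0:ℝ) 1 →
      dist (W x z t) (W y w t) ≤ (1 - t) * dist x y + t * dist z w)
    [CompleteSpace X]
(η : ℝ → ℝ → ℝ)
    (hηrange : ∀ r ε : ℝ, 0 < r → ε ∈ Set.Ioc (0:ℝ) 2 → η r ε ∈ Set.Ioc (0:ℝ) 1)
    (hmod : ∀ (r ε : ℝ) (a x y : X), 0 < r → ε ∈ Set.Ioc (0:ℝ) 2 →
      dist x a ≤ r → dist y a ≤ r → ε * r ≤ dist x y →
      dist (W x y (1/2)) a ≤ (1 - η r ε) * r)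
    (hmono : ∀ r s ε : ℝ, 0 < s → s ≤ r → ε ∈ Set.Ioc (0:ℝ) 2 → η r ε ≤ η s ε)
(S : Set X) (hSne : S.Nonempty) (hScl : IsClosed S)
    (hSconv : ∀ x ∈ S, ∀ y ∈ S, ∀ t : ℝ, t ∈ Set.Icc (0:ℝ) 1 → W x y t ∈ S)
    (P : X → X) (hPmem : ∀ x : X, P x ∈ S)
    (hPproj : ∀ x : X, ∀ z ∈ S, dist x (P x) ≤ dist x z)
    (x : ℕ → X) (δ : ℕ → ℝ) (hδ : ∀ n, 0 ≤ δ n) (hsum : Summable δ)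
    (hFej : ∀ n, ∀ q ∈ S, dist (x (n+1)) q ≤ dist (x n) q + δ n) :
    ∃ p : X, Filter.Tendsto (fun n => P (x n)) Filter.atTop (nhds p) := by
  classical
  obtain ⟨d, hd⟩ : ∃ d : ℕ → ℝ, ∀ n, d n = dist (x n) (P (x n)) := ⟨_, fun _ => rfl⟩
  obtain ⟨Δ, hΔdef⟩ : ∃ Δ : ℕ → ℝ, ∀ n, Δ n = ∑' k, δ (k + n) := ⟨_, fun _ => rfl⟩
  have hsumtail : ∀ n, Summable (fun k => δ (k + n)) := fun n =>
    (summable_nat_add_iff n).mpr hsum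
  have hΔnonneg : ∀ n, 0 ≤ Δ n := by
    intro n; rw [hΔdef n]; exact tsum_nonneg (fun k => hδ (k + n))
  have hΔrec : ∀ n, Δ n = δ n + Δ (n + 1) := by
    intro n
    rw [hΔdef n, hΔdef (n + 1)]
    rw [Summable.tsum_eq_zero_add (hsumtail n)]
    congr 1
    · simp
    · exact tsum_congr fun k => by congr 1; omega
  have hΔanti : ∀ m n, m ≤ n → Δ n ≤ Δ m := by
    intro m n hmn
    have : Antitone Δ := antitone_nat_of_succ_le (fun n => by
      have := hΔrec n; have := hδ n; linarith)
    exact this hmn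
  have hΔ0 : Filter.Tendsto Δ Filter.atTop (nhds 0) := by
    have : Δ = fun i => ∑' k, δ (k + i) := funext hΔdef
    rw [this]; exact tendsto_sum_nat_add δ
  -- key Fejér inequality over intervals
  have hkey : ∀ q ∈ S, ∀ m n, m ≤ n → dist (x n) q ≤ dist (x m) q + (Δ m - Δ n) := by
    intro q hq m n hmn
    obtain ⟨k, rfl⟩ := Nat.exists_eq_add_of_le hmn
    clear hmn
    induction k with
    | zero => simp
    | succ k ih =>
      have h1 := hFej (m + k) q hq
      have h2 := hΔrec (m + k)
      have h3 : m + (k + 1) = (m + k) + 1 := by omega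
      rw [h3]
      calc dist (x ((m + k) + 1)) q ≤ dist (x (m + k)) q + δ (m + k) := h1
        _ ≤ dist (x m) q + (Δ m - Δ (m + k)) + δ (m + k) := by linarith
        _ = dist (x m) q + (Δ m - Δ ((m + k) + 1)) := by linarith
  have hdq : ∀ n, ∀ q ∈ S, d n ≤ dist (x n) q := by
    intro n q hq; rw [hd n]; exact hPproj (x n) q hq
  obtain ⟨a, ha⟩ : ∃ a : ℕ → ℝ, ∀ n, a n = d n + Δ n := ⟨_, fun _ => rfl⟩
  have ha_anti : Antitone a := by
    intro m n hmn
    have h1 : d n ≤ dist (x n) (P (x m)) := hdq n _ (hPmem (x m))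
    have h2 : dist (x n) (P (x m)) ≤ dist (x m) (P (x m)) + (Δ m - Δ n) :=
      hkey _ (hPmem (x m)) m n hmn
    have h3 := hd m
    rw [ha n, ha m]
    linarith
  have ha_nonneg : ∀ n, 0 ≤ a n := by
    intro n
    rw [ha n, hd n]
    exact add_nonneg dist_nonneg (hΔnonneg n)
  have hbdd : BddBelow (Set.range a) := ⟨0, by rintro _ ⟨n, rfl⟩; exact ha_nonneg n⟩
  obtain ⟨L, hLdef⟩ : ∃ L : ℝ, L = ⨅ n, a n := ⟨_, rfl⟩
  have hL : Filter.Tendsto a Filter.atTop (nhds L) := by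
    rw [hLdef]; exact tendsto_atTop_ciInf ha_anti hbdd
  have hL0 : 0 ≤ L := by rw [hLdef]; exact le_ciInf ha_nonneg
  have hLle : ∀ n, L ≤ a n := by intro n; rw [hLdef]; exact ciInf_le hbdd n
  -- distance estimates
  have hdistPP : ∀ N n, N ≤ n → dist (P (x n)) (P (x N)) ≤ a n + a N := by
    intro N n hNn
    have h1 : dist (x n) (P (x N)) ≤ dist (x N) (P (x N)) + (Δ N - Δ n) :=
      hkey _ (hPmem (x N)) N n hNn
    have h2 : dist (P (x n)) (P (x N)) ≤ dist (P (x n)) (x n) + dist (x n) (P (x N)) :=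
      dist_triangle _ _ _
    have h3 : dist (P (x n)) (x n) = d n := by rw [dist_comm, hd n]
    have h4 : 0 ≤ Δ n := hΔnonneg n
    have h5 := hd N
    rw [ha n, ha N]
    linarith
  have hdistxn : ∀ N n, N ≤ n → dist (x n) (P (x N)) ≤ a N := by
    intro N n hNn
    have h1 : dist (x n) (P (x N)) ≤ dist (x N) (P (x N)) + (Δ N - Δ n) :=
      hkey _ (hPmem (x N)) N n hNn
    have h4 : 0 ≤ Δ n := hΔnonneg n
    have h5 := hd N
    rw [ha N]
    linarith
  have hcauchy : CauchySeq (fun n => P (x n)) := by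
    rw [Metric.cauchySeq_iff']
    intro ε' hε'
    rcases eq_or_lt_of_le hL0 with hLeq | hLpos
    · -- L = 0 case
      have hev : ∀ᶠ n in Filter.atTop, a n < ε' / 2 := by
        apply hL.eventually (gt_mem_nhds ?_)
        rw [← hLeq]; linarith
      obtain ⟨N, hN⟩ := hev.exists
      refine ⟨N, fun n hn => ?_⟩
      show dist (P (x n)) (P (x N)) < ε'
      have h1 := hdistPP N n hn
      have h2 : a n ≤ a N := ha_anti hn
      linarith
    · -- L > 0 case
      have ha0pos : 0 < a 0 := lt_of_lt_of_le hLpos (hLle 0)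
      obtain ⟨ε, hεdef⟩ : ∃ ε : ℝ, ε = min (ε' / (2 * a 0)) 2 := ⟨_, rfl⟩
      have hεpos : 0 < ε := by
        rw [hεdef]; exact lt_min (div_pos hε' (by linarith)) (by norm_num)
      have hεIoc : ε ∈ Set.Ioc (0:ℝ) 2 := ⟨hεpos, by rw [hεdef]; exact min_le_right _ _⟩
      obtain ⟨η0, hη0def⟩ : ∃ η0 : ℝ, η0 = η (a 0) ε := ⟨_, rfl⟩
      have hη0 : η0 ∈ Set.Ioc (0:ℝ) 1 := hη0def ▸ hηrange (a 0) ε ha0pos hεIoc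
      have hev1 : ∀ᶠ n in Filter.atTop, a n < L + η0 * L / 2 := by
        apply hL.eventually (gt_mem_nhds ?_)
        nlinarith [hη0.1, hLpos]
      have hev2 : ∀ᶠ n in Filter.atTop, Δ n < η0 * L / 2 := by
        apply hΔ0.eventually (gt_mem_nhds ?_)
        nlinarith [hη0.1, hLpos]
      obtain ⟨N, hN1, hN2⟩ := (hev1.and hev2).exists
      refine ⟨N, fun n hn => ?_⟩
      show dist (P (x n)) (P (x N)) < ε'
      have haNpos : 0 < a N := lt_of_lt_of_le hLpos (hLle N)
      have haN0 : a N ≤ a 0 := ha_anti (Nat.zero_le N)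
      by_cases hsplit : dist (P (x N)) (P (x n)) < ε * a N
      · have h1 : ε * a N ≤ ε * a 0 := by nlinarith
        have h2 : ε * a 0 ≤ (ε' / (2 * a 0)) * a 0 :=
          mul_le_mul_of_nonneg_right (by rw [hεdef]; exact min_le_left _ _) ha0pos.le
        have h3 : (ε' / (2 * a 0)) * a 0 = ε' / 2 := by field_simp
        rw [dist_comm]
        linarith
      · exfalso
        push_neg at hsplit
        have hPn_le : dist (P (x n)) (x n) ≤ a N := by
          rw [dist_comm, ← hd n]
          have h1 : d n ≤ a n := by rw [ha n]; exact le_add_of_nonneg_right (hΔnonneg n)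
          exact h1.trans (ha_anti hn)
        have hq := hmod (a N) ε (x n) (P (x N)) (P (x n)) haNpos hεIoc
          (by rw [dist_comm]; exact hdistxn N n hn) hPn_le hsplit
        have hqS' : W (P (x N)) (P (x n)) (1/2) ∈ S :=
          hSconv _ (hPmem (x N)) _ (hPmem (x n)) (1/2) (by norm_num)
        have hdnq : d n ≤ dist (W (P (x N)) (P (x n)) (1/2)) (x n) := by
          rw [dist_comm]; exact hdq n _ hqS'
        have hηmono : η0 ≤ η (a N) ε := hη0def ▸ hmono (a 0) (a N) ε haNpos haN0 hεIoc
        have hηaN : η (a N) ε ∈ Set.Ioc (0:ℝ) 1 := hηrange (a N) ε haNpos hεIoc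
        have hdn_lb : L - η0 * L / 2 < d n := by
          have h1 : L ≤ a n := hLle n
          have h2 : Δ n ≤ Δ N := hΔanti N n hn
          have h3 := ha n
          linarith
        have hchain : (1 - η (a N) ε) * a N < L - η0 * L / 2 := by
          have h1 : (1 - η (a N) ε) * a N ≤ (1 - η0) * a N := by nlinarith [hη0.2]
          have h2 : (1 - η0) * a N ≤ (1 - η0) * (L + η0 * L / 2) := by
            nlinarith [hη0.2]
          nlinarith [h1, h2, mul_pos (mul_pos hη0.1 hη0.1) hLpos]
        linarith
  exact cauchySeq_tendsto_of_complete hcauchy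
end

section
/- Let (X,d,W) be a UCW-hyperbolic space with monotone modulus η, (δ_n) non-negative reals, u: (0,∞) → ℕ with δ_n ≤ ε for all n ≥ u(ε), and T: X → X asymptotically nonexpansive w.r.t. (δ_n). Let x, y ∈ X, b > 0 with d(x,y) ≤ b, λ ∈ [0,1], z := (1-λ)x + λy, and define Θ(ε) := (1/2)·min(ε/2, b, (ε²/(16b))·η(2b, min(ε/(2b),2))) and γ(ε) := u(Θ(ε)/b). If ε > 0, n ≥ γ(ε), d(x,Tⁿx) ≤ Θ(ε), and d(y,Tⁿy) ≤ Θ(ε), then d(z,Tⁿz) ≤ ε. -/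
set_option maxHeartbeats 1000000 in
/-- Quantitative convexity of approximate fixed points of asymptotically
nonexpansive maps (part (i)). -/
theorem stmt_19
{X : Type*} [MetricSpace X] (W : X → X → ℝ → X)
    (W1 : ∀ (x y z : X) (t : ℝ), t ∈ Set.Icc (0:ℝ) 1 →
      dist z (W x y t) ≤ (1 - t) * dist z x + t * dist z y)
    (W2 : ∀ (x y : X) (t s : ℝ), t ∈ Set.Icc (0:ℝ) 1 → s ∈ Set.Icc (0:ℝ) 1 →
      dist (W x y t) (W x y s) = |t - s| * dist x y)
    (W3 : ∀ (x y : X) (t : ℝ), t ∈ Set.Icc (0:ℝ) 1 → W x y t = W y x (1 - t))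
    (W4 : ∀ (x y z w : X) (t : ℝ), t ∈ Set.Icc (0:ℝ) 1 →
      dist (W x z t) (W y w t) ≤ (1 - t) * dist x y + t * dist z w)
(η : ℝ → ℝ → ℝ)
    (hηrange : ∀ r ε : ℝ, 0 < r → ε ∈ Set.Ioc (0:ℝ) 2 → η r ε ∈ Set.Ioc (0:ℝ) 1)
    (hmod : ∀ (r ε : ℝ) (a x y : X), 0 < r → ε ∈ Set.Ioc (0:ℝ) 2 →
      dist x a ≤ r → dist y a ≤ r → ε * r ≤ dist x y →
      dist (W x y (1/2)) a ≤ (1 - η r ε) * r)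
    (hmono : ∀ r s ε : ℝ, 0 < s → s ≤ r → ε ∈ Set.Ioc (0:ℝ) 2 → η r ε ≤ η s ε)
    (δ : ℕ → ℝ) (hδ : ∀ n, 0 ≤ δ n)
    (u : ℝ → ℕ) (hu : ∀ ε : ℝ, 0 < ε → ∀ n, u ε ≤ n → δ n ≤ ε)
    (T : X → X)
    (hT : ∀ (x y : X) (n : ℕ), dist (T^[n] x) (T^[n] y) ≤ (1 + δ n) * dist x y)
    (x y : X) (b : ℝ) (hb : 0 < b) (hxy : dist x y ≤ b)
    (l : ℝ) (hl : l ∈ Set.Icc (0:ℝ) 1)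
    (Θ : ℝ → ℝ)
    (hΘ : ∀ ε : ℝ, Θ ε = (1/2) * min (ε/2) (min b (ε^2/(16*b) * η (2*b) (min (ε/(2*b)) 2))))
    (ε : ℝ) (hε : 0 < ε) (n : ℕ) (hn : u (Θ ε / b) ≤ n)
    (hx : dist x (T^[n] x) ≤ Θ ε) (hy : dist y (T^[n] y) ≤ Θ ε) :
    dist (W x y l) (T^[n] (W x y l)) ≤ ε := by
  obtain ⟨hl0, hl1⟩ := hl
  set z := W x y l with hzdef
  set D := dist x y with hDdef
  have hD0 : (0:ℝ) ≤ D := dist_nonneg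
  have h2b : (0:ℝ) < 2*b := by linarith
  set e' := min (ε/(2*b)) 2 with he'def
  set ηv := η (2*b) e' with hηvdef
  have he' : e' ∈ Set.Ioc (0:ℝ) 2 := ⟨lt_min (by positivity) two_pos, min_le_right _ _⟩
  have hηv0 : 0 < ηv := (hηrange (2*b) e' h2b he').1
  have hηv1 : ηv ≤ 1 := (hηrange (2*b) e' h2b he').2
  have hΘval : Θ ε = (1/2) * min (ε/2) (min b (ε^2/(16*b) * ηv)) := hΘ ε
  clear_value z D e' ηv
  have hm1 : min (ε/2) (min b (ε^2/(16*b) * ηv)) ≤ ε/2 := min_le_left _ _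
  have hm2 : min (ε/2) (min b (ε^2/(16*b) * ηv)) ≤ b := (min_le_right _ _).trans (min_le_left _ _)
  have hm3 : min (ε/2) (min b (ε^2/(16*b) * ηv)) ≤ ε^2/(16*b) * ηv :=
    (min_le_right _ _).trans (min_le_right _ _)
  have hm0 : 0 < min (ε/2) (min b (ε^2/(16*b) * ηv)) :=
    lt_min (by positivity) (lt_min hb (by positivity))
  have hΘ0 : 0 < Θ ε := by rw [hΘval]; linarith only [hm0]
  have hΘ1 : Θ ε ≤ ε/4 := by rw [hΘval]; linarith only [hm1]
  have hΘ2 : Θ ε ≤ b/2 := by rw [hΘval]; linarith only [hm2]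
  have hΘ3 : 2 * Θ ε ≤ ε^2/(16*b) * ηv := by rw [hΘval]; linarith only [hm3]
  have hδn : δ n ≤ Θ ε / b := hu _ (by positivity) n hn
  have hδb : δ n * b ≤ Θ ε := (le_div_iff₀ hb).mp hδn
  have hδ0 : 0 ≤ δ n := hδ n
  have hδhalf : δ n ≤ 1/2 := by nlinarith only [hδb, hΘ2, hb]
  -- endpoints
  have hW0 : dist x (W x y 0) ≤ 0 := by
    have h := W1 x y x 0 ⟨le_refl 0, zero_le_one⟩
    simpa using h
  have hW1' : dist y (W x y 1) ≤ 0 := by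
    have h := W1 x y y 1 ⟨zero_le_one, le_refl 1⟩
    simpa using h
  have hzx : dist z x ≤ l * D := by
    have h2 := W2 x y l 0 ⟨hl0, hl1⟩ ⟨le_refl 0, zero_le_one⟩
    rw [← hzdef, ← hDdef, sub_zero, abs_of_nonneg hl0] at h2
    have h3 := dist_triangle z (W x y 0) x
    have h4 : dist (W x y 0) x = dist x (W x y 0) := dist_comm _ _
    linarith only [h2, h3, h4, hW0]
  have hzy : dist z y ≤ (1-l) * D := by
    have h2 := W2 x y l 1 ⟨hl0, hl1⟩ ⟨zero_le_one, le_refl 1⟩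
    rw [← hzdef, ← hDdef] at h2
    have habs : |l - 1| = 1 - l := by
      rw [abs_of_nonpos (by linarith : l - 1 ≤ 0)]; ring
    rw [habs] at h2
    have h3 := dist_triangle z (W x y 1) y
    have h4 : dist (W x y 1) y = dist y (W x y 1) := dist_comm _ _
    linarith only [h2, h3, h4, hW1']
  -- images
  have hNzx : dist (T^[n] z) x ≤ (1 + δ n) * (l * D) + Θ ε := by
    have h1 : dist (T^[n] z) (T^[n] x) ≤ (1 + δ n) * dist z x := hT z x n
    have h3 := dist_triangle (T^[n] z) (T^[n] x) x
    have h4 : dist (T^[n] x) x = dist x (T^[n] x) := dist_comm _ _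
    have h5 : (1 + δ n) * dist z x ≤ (1 + δ n) * (l * D) :=
      mul_le_mul_of_nonneg_left hzx (by linarith only [hδ0])
    linarith only [h1, h3, h4, h5, hx]
  have hNzy : dist (T^[n] z) y ≤ (1 + δ n) * ((1-l) * D) + Θ ε := by
    have h1 : dist (T^[n] z) (T^[n] y) ≤ (1 + δ n) * dist z y := hT z y n
    have h3 := dist_triangle (T^[n] z) (T^[n] y) y
    have h4 : dist (T^[n] y) y = dist y (T^[n] y) := dist_comm _ _
    have h5 : (1 + δ n) * dist z y ≤ (1 + δ n) * ((1-l) * D) :=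
      mul_le_mul_of_nonneg_left hzy (by linarith only [hδ0])
    linarith only [h1, h3, h4, h5, hy]
  set r := (1 + δ n) * (l * D) + Θ ε with hrdef
  set ry := (1 + δ n) * ((1-l) * D) + Θ ε with hrydef
  clear_value r ry
  have hlD0 : 0 ≤ l * D := mul_nonneg hl0 hD0
  have h1lD0 : 0 ≤ (1-l) * D := mul_nonneg (by linarith) hD0
  have hr0 : 0 < r := by
    rw [hrdef]
    linarith only [mul_nonneg (by linarith only [hδ0] : (0:ℝ) ≤ 1 + δ n) hlD0, hΘ0]
  have hlDb : l * D ≤ b := by linarith only [h1lD0, hxy]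
  have hr2b : r ≤ 2*b := by
    rw [hrdef]
    have h6 : (1 + δ n) * (l * D) ≤ (3/2) * b :=
      mul_le_mul (by linarith only [hδhalf]) hlDb hlD0 (by norm_num)
    linarith only [h6, hΘ2]
  have hzxr : dist z x ≤ r := by
    rw [hrdef]
    linarith only [hzx, hΘ0, mul_nonneg hδ0 hlD0]
  by_cases hcase : dist z (T^[n] z) ≤ ε
  · exact hcase
  exfalso
  have hdgt : ε < dist z (T^[n] z) := not_le.mp hcase
  have hd2r : dist z (T^[n] z) ≤ 2*r := by
    have h3 := dist_triangle z x (T^[n] z)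
    have h4 : dist x (T^[n] z) = dist (T^[n] z) x := dist_comm _ _
    linarith only [h3, h4, hzxr, hNzx]
  have hre : ε/2 < r := by linarith only [hdgt, hd2r]
  have hεlt : ε < 4*b := by linarith only [hdgt, hd2r, hr2b]
  have hfrac : e' * r ≤ dist z (T^[n] z) := by
    have h1 : e' ≤ ε/(2*b) := by rw [he'def]; exact min_le_left _ _
    have h2 : e' * r ≤ (ε/(2*b)) * r := mul_le_mul_of_nonneg_right h1 hr0.le
    have h3 : (ε/(2*b)) * r ≤ (ε/(2*b)) * (2*b) := mul_le_mul_of_nonneg_left hr2b (by positivity)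
    have h4 : (ε/(2*b)) * (2*b) = ε := by field_simp
    linarith only [h2, h3, h4, hdgt]
  have hconv : dist (W z (T^[n] z) (1/2)) x ≤ (1 - η r e') * r :=
    hmod r e' x z (T^[n] z) hr0 he' hzxr hNzx hfrac
  have hmono' : ηv ≤ η r e' := by rw [hηvdef]; exact hmono (2*b) r e' hr0 hr2b he'
  have hmx : dist (W z (T^[n] z) (1/2)) x ≤ r - ηv * (ε/2) := by
    have h1 : ηv * (ε/2) ≤ η r e' * r := by
      linarith only [mul_nonneg (sub_nonneg.mpr hmono') hr0.le,
        mul_nonneg hηv0.le (by linarith only [hre] : (0:ℝ) ≤ r - ε/2)]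
    linarith only [hconv, h1]
  have hW1y : dist y (W z (T^[n] z) (1/2)) ≤
      (1 - 1/2) * dist y z + (1/2) * dist y (T^[n] z) :=
    W1 z (T^[n] z) y (1/2) ⟨by norm_num, by norm_num⟩
  have hyz : dist y z = dist z y := dist_comm _ _
  have hyNz : dist y (T^[n] z) = dist (T^[n] z) y := dist_comm _ _
  have hmy : dist y (W z (T^[n] z) (1/2)) ≤ ry := by
    have h6 : (1-l)*D ≤ (1 + δ n) * ((1-l)*D) := by
      linarith only [mul_nonneg hδ0 h1lD0]
    linarith only [hW1y, hzy, hNzy, hΘ0, hrydef, h6, hyz, hyNz]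
  have htri : D ≤ dist (W z (T^[n] z) (1/2)) x + dist y (W z (T^[n] z) (1/2)) := by
    have h := dist_triangle x (W z (T^[n] z) (1/2)) y
    have e1 : dist x (W z (T^[n] z) (1/2)) = dist (W z (T^[n] z) (1/2)) x := dist_comm _ _
    have e2 : dist (W z (T^[n] z) (1/2)) y = dist y (W z (T^[n] z) (1/2)) := dist_comm _ _
    linarith only [h, e1, e2, hDdef]
  have hr_ry : r + ry = (1 + δ n) * D + 2 * Θ ε := by rw [hrdef, hrydef]; ring
  have hsum : ηv * (ε/2) ≤ δ n * D + 2 * Θ ε := by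
    linarith only [htri, hmx, hmy, hr_ry]
  have hδD : δ n * D ≤ Θ ε := by
    have h := mul_le_mul_of_nonneg_left hxy hδ0
    linarith only [h, hδb]
  have hfin : ηv * (ε/2) ≤ 3 * Θ ε := by linarith only [hsum, hδD]
  have hfin2 : ηv * (ε/2) ≤ ηv * (3 * (ε^2/(32*b))) := by
    have h2 : (3:ℝ)/2 * (ε^2/(16*b) * ηv) = ηv * (3*(ε^2/(32*b))) := by ring
    linarith only [hΘ3, hfin, h2]
  have hq : ε/2 ≤ 3*(ε^2/(32*b)) := le_of_mul_le_mul_left hfin2 hηv0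
  have hbne : b ≠ 0 := ne_of_gt hb
  have hq2 : 16*b*ε ≤ 3*ε^2 := by
    have h32 : (0:ℝ) < 32*b := by linarith
    have h := mul_le_mul_of_nonneg_right hq h32.le
    have h4 : 3*(ε^2/(32*b))*(32*b) = 3*ε^2 := by field_simp
    have h5 : ε/2*(32*b) = 16*b*ε := by ring
    linarith only [h, h4, h5]
  nlinarith only [hq2, hεlt, hε, mul_pos hb hε]
end
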